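/- arXiv:2006.02092 — 9 statements merged into one kernel-verified Lean document; each statement's English description precedes it below -/
import Mathlib

section
/- Let Ω ⊆ V be a transitive state space whose inner product ⟪·,·⟫ is GL(Ω)-invariant and whose positive cone V₊ is self-dual with respect to ⟪·,·⟫, and let ω_M be a GL(Ω)-invariant state with ‖ω_M‖ = 1 and ⟪ω_M, ω⟫ = 1 for all ω ∈ Ω. Let F and G be ideal measurements with outcome sets finite metric spaces (A, d_A) and (B, d_B), let M̃ be an approximate joint measurement of (F, G) with marginals M̃^F and M̃^G, and let ε₁, ε₂ ∈ [0,1] satisfy ε₁ + ε₂ ≤ 1. Then there exists a state ω ∈ Ω such that 𝒲_{ε₁}(M̃^F, F) ≥ W_{ε₁+ε₂}(ω^F) and 𝒲_{ε₂}(M̃^G, G) ≥ W_{ε₁+ε₂}(ω^G). -/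
open RealInnerProductSpace

variable {V : Type*} [NormedAddCommGroup V] [InnerProductSpace ℝ V] [FiniteDimensional ℝ V]

/-- A state space: nonempty compact convex set whose affine hull misses `0` and has
dimension `dim V - 1` (so it spans `V`). -/
def IsStateSpace (Ω : Set V) : Prop :=
  Ω.Nonempty ∧ IsCompact Ω ∧ Convex ℝ Ω ∧ (0 : V) ∉ affineSpan ℝ Ω ∧
    Module.finrank ℝ (vectorSpan ℝ Ω) + 1 = Module.finrank ℝ V

/-- The group `GL(Ω)` of linear bijections preserving `Ω`. -/
def autGroup (Ω : Set V) : Set (V ≃ₗ[ℝ] V) := {T | T '' Ω = Ω}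

/-- Transitivity of the action of `GL(Ω)` on the extreme points of `Ω`. -/
def IsTransitive (Ω : Set V) : Prop :=
  ∀ ω₁ ∈ Set.extremePoints ℝ Ω, ∀ ω₂ ∈ Set.extremePoints ℝ Ω,
    ∃ T ∈ autGroup Ω, T ω₁ = ω₂

/-- The inner product of `V` is invariant under `GL(Ω)`. -/
def InvariantInner (Ω : Set V) : Prop :=
  ∀ T ∈ autGroup Ω, ∀ x y : V, ⟪T x, T y⟫ = ⟪x, y⟫

/-- The positive cone generated by `Ω`. -/
def posCone (Ω : Set V) : Set V := {x | ∃ l : ℝ, ∃ ω ∈ Ω, 0 ≤ l ∧ x = l • ω}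

/-- Self-duality of the positive cone with respect to the inner product of `V`. -/
def SelfDualCone (Ω : Set V) : Prop :=
  posCone Ω = {y | ∀ x ∈ posCone Ω, 0 ≤ ⟪x, y⟫}

/-- An effect on `Ω`. -/
def IsEffect (Ω : Set V) (e : V) : Prop := ∀ ω ∈ Ω, 0 ≤ ⟪e, ω⟫ ∧ ⟪e, ω⟫ ≤ 1

/-- A measurement with outcome set `A`: a family of nonzero effects summing to the
unit effect `ωM`. -/
def IsMeasurement (Ω : Set V) (ωM : V) {A : Type*} [Fintype A] (f : A → V) : Prop :=
  (∀ a, f a ≠ 0 ∧ IsEffect Ω (f a)) ∧ ∑ a, f a = ωM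

/-- An ideal measurement. -/
def IsIdeal (Ω : Set V) (ωM : V) {A : Type*} [Fintype A] (f : A → V) : Prop :=
  IsMeasurement Ω ωM f ∧
    ∃ c : ℝ, 0 < c ∧ (∀ ω ∈ Set.extremePoints ℝ Ω, ‖ω‖ = c) ∧
      ∀ a, ∃ S : Finset V, ↑S ⊆ Set.extremePoints ℝ Ω ∧
        (f a = (c ^ 2)⁻¹ • ∑ ω' ∈ S, ω' ∨ f a = ωM - (c ^ 2)⁻¹ • ∑ ω' ∈ S, ω')

/-- First marginal of a joint measurement. -/
def margF {A B : Type*} [Fintype B] (m : A × B → V) : A → V := fun a => ∑ b, m (a, b)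

/-- Second marginal of a joint measurement. -/
def margG {A B : Type*} [Fintype A] (m : A × B → V) : B → V := fun b => ∑ a, m (a, b)

open Classical in
/-- `∑_{a' : d(a',a) ≤ w/2} ⟪f a', ω⟫`. -/
noncomputable def ballSum {A : Type*} [Fintype A] [MetricSpace A]
    (f : A → V) (ω : V) (a : A) (w : ℝ) : ℝ :=
  ∑ a' ∈ Finset.univ.filter (fun x => dist x a ≤ w / 2), ⟪f a', ω⟫

/-- Overall width of the distribution of `f` on `ω` at confidence level `1 - ε`. -/
noncomputable def overallWidth {A : Type*} [Fintype A] [MetricSpace A]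
    (f : A → V) (ω : V) (ε : ℝ) : ℝ :=
  sInf {w : ℝ | 0 < w ∧ ∃ a : A, 1 - ε ≤ ballSum f ω a w}

/-- Error bar width of `ft` relative to `f`. -/
noncomputable def errorBarWidth (Ω : Set V) {A : Type*} [Fintype A] [MetricSpace A]
    (ft f : A → V) (ε : ℝ) : ℝ :=
  sInf {w : ℝ | 0 < w ∧ ∀ a : A, ∀ ω ∈ Ω, ⟪f a, ω⟫ = 1 → 1 - ε ≤ ballSum ft ω a w}

/-- Werner's measure `D_W(ft, f)`. -/
noncomputable def wernerD (Ω : Set V) {A : Type*} [Fintype A] [MetricSpace A]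
    (ft f : A → V) : ℝ :=
  sSup {d : ℝ | ∃ ω ∈ Ω, ∃ h : A → ℝ, (∀ a₁ a₂ : A, |h a₁ - h a₂| ≤ dist a₁ a₂) ∧
    d = |∑ a, h a * (⟪ft a, ω⟫ - ⟪f a, ω⟫)|}

/-- `l∞` distance `D_∞(ft, f)`. -/
noncomputable def dInfty (Ω : Set V) {A : Type*} (ft f : A → V) : ℝ :=
  sSup {d : ℝ | ∃ ω ∈ Ω, ∃ a : A, d = |⟪ft a, ω⟫ - ⟪f a, ω⟫|}

/-- Minimum localization error `LE(ω^F)`. -/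
noncomputable def locError {A : Type*} [Fintype A] [Nonempty A] (f : A → V) (ω : V) : ℝ :=
  1 - Finset.univ.sup' Finset.univ_nonempty (fun a => ⟪f a, ω⟫)

/-!
For an ideal `F`, self-duality makes each effect `f a` a multiple `⟪ωM, f a⟫ • ω_a` of a state on
which `F` yields `a` with certainty. Evaluating the error bar condition at `ω_a`, weighting by
`⟪ωM, f a⟫` and summing over `a`, the symmetry of the distance turns it into a statement about `M`:
averaged over the outcomes `p` of `M` (weights `⟪ωM, m p⟫`), the probability that `F`, measured on
the state `ω_p ∝ m p`, lands in the error bar around `p.1` is at least `1 - ε₁`. Likewise for `G`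
with `ε₂`, so by the union bound some `p` has both probabilities at least `1 - (ε₁ + ε₂)`, and
`ω_p` is the required state.
-/

open Finset Filter Topology

section Cone

variable {E : Type*} [NormedAddCommGroup E] [InnerProductSpace ℝ E] {Ω : Set E}

theorem mem_posCone_of_mem {ω : E} (hω : ω ∈ Ω) : ω ∈ posCone Ω :=
  ⟨1, ω, hω, zero_le_one, (one_smul ℝ ω).symm⟩

theorem SelfDualCone.inner_nonneg (hsd : SelfDualCone Ω) {x y : E}
    (hx : x ∈ posCone Ω) (hy : y ∈ posCone Ω) : 0 ≤ ⟪x, y⟫ := by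
  rw [hsd] at hy
  exact hy x hx

theorem SelfDualCone.mem_posCone_of_isEffect (hsd : SelfDualCone Ω) {e : E}
    (he : IsEffect Ω e) : e ∈ posCone Ω := by
  rw [hsd]
  rintro x ⟨l, ω, hω, hl, rfl⟩
  rw [real_inner_smul_left, real_inner_comm]
  exact mul_nonneg hl (he ω hω).1

theorem exists_mem_eq_inner_smul_of_mem_posCone {ωM : E} (hωMunit : ∀ ω ∈ Ω, ⟪ωM, ω⟫ = 1)
    {x : E} (hx : x ∈ posCone Ω) (hx0 : x ≠ 0) :
    0 < ⟪ωM, x⟫ ∧ ∃ ω ∈ Ω, x = ⟪ωM, x⟫ • ω := by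
  obtain ⟨l, ω, hω, hl, rfl⟩ := hx
  have hinner : ⟪ωM, l • ω⟫ = l := by rw [real_inner_smul_right, hωMunit ω hω, mul_one]
  have hl0 : l ≠ 0 := by rintro rfl; simp at hx0
  rw [hinner]
  exact ⟨lt_of_le_of_ne hl (Ne.symm hl0), ω, hω, rfl⟩

end Cone

section Ideal

variable {E : Type*} [NormedAddCommGroup E] [InnerProductSpace ℝ E] {Ω : Set E} {ωM : E}
  {A : Type*} [Fintype A] {f : A → E}

theorem SelfDualCone.one_le_inner_smul_sum (hsd : SelfDualCone Ω) {S : Finset E}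
    (hS : ∀ σ ∈ S, σ ∈ Ω) {c : ℝ} (hc : 0 < c) {σ : E} (hσ : σ ∈ S) (hσc : ‖σ‖ = c) :
    1 ≤ ⟪(c ^ 2)⁻¹ • ∑ ω ∈ S, ω, σ⟫ := by
  have hterm : ∀ ω ∈ S, 0 ≤ ⟪ω, σ⟫ := fun ω hω =>
    hsd.inner_nonneg (mem_posCone_of_mem (hS ω hω)) (mem_posCone_of_mem (hS σ hσ))
  have hσσ : ⟪σ, σ⟫ = c ^ 2 := by rw [real_inner_self_eq_norm_sq, hσc]
  rw [real_inner_smul_left, sum_inner, ← div_eq_inv_mul, one_le_div (by positivity), ← hσσ]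
  exact single_le_sum hterm hσ

theorem IsIdeal.inner_self (hsd : SelfDualCone Ω) (hωMnorm : ‖ωM‖ = 1)
    (hωMunit : ∀ ω ∈ Ω, ⟪ωM, ω⟫ = 1) (hF : IsIdeal Ω ωM f) (a : A) :
    ⟪f a, f a⟫ = ⟪ωM, f a⟫ := by
  obtain ⟨hmeas, c, hc, hnorm, hS⟩ := hF
  obtain ⟨S, hSext, hfa⟩ := hS a
  set e : E := (c ^ 2)⁻¹ • ∑ ω ∈ S, ω
  have hSΩ : ∀ σ ∈ S, σ ∈ Ω := fun σ hσ => extremePoints_subset (hSext hσ)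
  -- `e` is sharp on `S`: self-duality bounds `⟪e, σ⟫` below by `⟪σ, σ⟫ / c ^ 2 = 1`,
  -- and `f a ∈ {e, ωM - e}` being an effect bounds it above by `1`.
  have he_sharp : ∀ σ ∈ S, ⟪e, σ⟫ = 1 := by
    intro σ hσ
    refine le_antisymm ?_ (hsd.one_le_inner_smul_sum hSΩ hc hσ (hnorm σ (hSext hσ)))
    have heff := (hmeas.1 a).2 σ (hSΩ σ hσ)
    rcases hfa with h | h <;> rw [h] at heff
    · exact heff.2
    · rw [inner_sub_left, hωMunit σ (hSΩ σ hσ)] at heff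
      linarith [heff.1]
  have inner_e : ∀ z : E, (∀ σ ∈ S, ⟪z, σ⟫ = 1) → ⟪z, e⟫ = (c ^ 2)⁻¹ * #S := by
    intro z hz
    rw [real_inner_smul_right, inner_sum, sum_congr rfl hz, sum_const, nsmul_one]
  have hee := inner_e e he_sharp
  have hMe := inner_e ωM fun σ hσ => hωMunit σ (hSΩ σ hσ)
  have hMM : ⟪ωM, ωM⟫ = 1 := inner_self_eq_one_of_norm_eq_one hωMnorm
  rcases hfa with h | h <;> rw [h]
  · rw [hee, hMe]
  · rw [inner_sub_left, inner_sub_right, inner_sub_right, hMM, hee, hMe, real_inner_comm ωM e,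
      hMe]
    ring

theorem IsIdeal.exists_mem_inner_eq_one (hsd : SelfDualCone Ω) (hωMnorm : ‖ωM‖ = 1)
    (hωMunit : ∀ ω ∈ Ω, ⟪ωM, ω⟫ = 1) (hF : IsIdeal Ω ωM f) (a : A) :
    0 < ⟪ωM, f a⟫ ∧ ∃ ω ∈ Ω, ⟪f a, ω⟫ = 1 ∧ f a = ⟪ωM, f a⟫ • ω := by
  obtain ⟨hs, ω, hω, hfa⟩ := exists_mem_eq_inner_smul_of_mem_posCone hωMunit
    (hsd.mem_posCone_of_isEffect (hF.1.1 a).2) (hF.1.1 a).1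
  refine ⟨hs, ω, hω, ?_, hfa⟩
  have h : ⟪ωM, f a⟫ * ⟪f a, ω⟫ = ⟪ωM, f a⟫ * 1 := by
    rw [mul_one, ← real_inner_smul_right, ← hfa, hF.inner_self hsd hωMnorm hωMunit a]
  exact mul_left_cancel₀ hs.ne' h

end Ideal

section Ball

variable {E : Type*} [NormedAddCommGroup E] [InnerProductSpace ℝ E]
  {A B : Type*} [Fintype A] [MetricSpace A] [Fintype B]

theorem ballSum_smul (f : A → E) (c : ℝ) (ω : E) (a : A) (w : ℝ) :
    ballSum f (c • ω) a w = c * ballSum f ω a w := by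
  simp only [ballSum, real_inner_smul_right, mul_sum]

theorem ballSum_sum {ι : Type*} (s : Finset ι) (f : A → E) (ω : ι → E) (a : A) (w : ℝ) :
    ballSum f (∑ i ∈ s, ω i) a w = ∑ i ∈ s, ballSum f (ω i) a w := by
  simp only [ballSum, inner_sum]
  exact sum_comm

theorem sum_ballSum_eq_sum_mul {ι : Type*} [Fintype ι] (f : A → E) {m ω : ι → E} {t : ι → ℝ}
    (hm : ∀ i, m i = t i • ω i) (π : ι → A) (w : ℝ) :
    ∑ i, ballSum f (m i) (π i) w = ∑ i, t i * ballSum f (ω i) (π i) w :=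
  sum_congr rfl fun i _ => by rw [hm i, ballSum_smul]

theorem ballSum_mono {f : A → E} {ω : E} (hf : ∀ x, 0 ≤ ⟪f x, ω⟫) (a : A) {w w' : ℝ}
    (hw : w ≤ w') : ballSum f ω a w ≤ ballSum f ω a w' := by
  refine sum_le_sum_of_subset_of_nonneg (fun x hx => ?_) fun x _ _ => hf x
  simp only [mem_filter, mem_univ, true_and] at hx ⊢
  linarith

theorem ballSum_le_inner_sum {f : A → E} {ω : E} (hf : ∀ x, 0 ≤ ⟪f x, ω⟫) (a : A) (w : ℝ) :
    ballSum f ω a w ≤ ⟪∑ x, f x, ω⟫ := by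
  rw [sum_inner]
  exact sum_le_sum_of_subset_of_nonneg (filter_subset _ _) fun x _ _ => hf x

theorem ballSum_eq_inner_sum {f : A → E} {ω : E} {a : A} {w : ℝ}
    (hw : ∀ x, dist x a ≤ w / 2) : ballSum f ω a w = ⟪∑ x, f x, ω⟫ := by
  rw [ballSum, filter_true_of_mem fun x _ => hw x, sum_inner]

theorem sum_ballSum_comm (f e : A → E) (w : ℝ) :
    ∑ x, ballSum f (e x) x w = ∑ a, ballSum e (f a) a w := by
  simp only [ballSum, sum_filter]
  rw [sum_comm]
  refine sum_congr rfl fun a _ => sum_congr rfl fun x _ => ?_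
  rw [dist_comm, real_inner_comm]

theorem sum_ballSum_fst (f : A → E) (m : A × B → E) (w : ℝ) :
    ∑ p : A × B, ballSum f (m p) p.1 w = ∑ x, ballSum f (margF m x) x w := by
  simp only [Fintype.sum_prod_type, margF, ballSum_sum]

theorem sum_ballSum_snd (g : A → E) (m : B × A → E) (w : ℝ) :
    ∑ p : B × A, ballSum g (m p) p.2 w = ∑ y, ballSum g (margG m y) y w := by
  simp only [Fintype.sum_prod_type_right, margG, ballSum_sum]

/-- Balls in a finite metric space do not grow on some interval `(W, w]`. -/
theorem eventually_ballSum_eq (W : ℝ) :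
    ∀ᶠ w in 𝓝[>] W, ∀ (f : A → E) (ω : E) (a : A), ballSum f ω a w = ballSum f ω a W := by
  have hball : ∀ᶠ w in 𝓝[>] W, ∀ x a : A, dist x a ≤ w / 2 → dist x a ≤ W / 2 := by
    refine eventually_all.2 fun x => eventually_all.2 fun a => ?_
    by_cases h : dist x a ≤ W / 2
    · exact Eventually.of_forall fun _ _ => h
    · filter_upwards [nhdsWithin_le_nhds (eventually_lt_nhds (by linarith : W < 2 * dist x a))]
        with w hw hle
      linarith
  filter_upwards [hball, self_mem_nhdsWithin] with w hw hWw f ω a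
  refine sum_congr (filter_congr fun x _ => ⟨hw x a, fun h => ?_⟩) fun _ _ => rfl
  linarith [Set.mem_Ioi.1 hWw]

theorem eventually_forall_dist_le :
    ∀ᶠ w : ℝ in atTop, ∀ x a : A, dist x a ≤ w / 2 :=
  eventually_all.2 fun x => eventually_all.2 fun a =>
    (eventually_ge_atTop (2 * dist x a)).mono fun w hw => by linarith

end Ball

section Widths

variable {E : Type*} [NormedAddCommGroup E] [InnerProductSpace ℝ E] {Ω : Set E} {ωM : E}
  {A B : Type*} [Fintype A] [MetricSpace A] [Fintype B]

/-- The condition on `w` in the definition of `errorBarWidth`. -/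
def IsErrorBar (Ω : Set E) (ft f : A → E) (ε w : ℝ) : Prop :=
  ∀ a, ∀ ω ∈ Ω, ⟪f a, ω⟫ = 1 → 1 - ε ≤ ballSum ft ω a w

theorem errorBarWidth_nonneg (ft f : A → E) (ε : ℝ) : 0 ≤ errorBarWidth Ω ft f ε :=
  Real.sInf_nonneg fun _ hw => hw.1.le

theorem overallWidth_le_of_le_ballSum {f : A → E} {ω : E} {ε W : ℝ} {a : A}
    (hf : ∀ x, 0 ≤ ⟪f x, ω⟫) (hW : 0 ≤ W) (h : 1 - ε ≤ ballSum f ω a W) :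
    overallWidth f ω ε ≤ W :=
  le_of_forall_pos_le_add fun δ hδ =>
    csInf_le ⟨0, fun _ hw => hw.1.le⟩ ⟨by linarith, a, h.trans (ballSum_mono hf a (by linarith))⟩

theorem IsErrorBar.mono {ft f : A → E} {ε w w' : ℝ} (h : IsErrorBar Ω ft f ε w)
    (hft : ∀ x, ∀ ω ∈ Ω, 0 ≤ ⟪ft x, ω⟫) (hw : w ≤ w') : IsErrorBar Ω ft f ε w' :=
  fun a ω hω ha => (h a ω hω ha).trans (ballSum_mono (fun x => hft x ω hω) a hw)

/-- The infimum defining `errorBarWidth` is attained, up to a radius with the same balls. -/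
theorem exists_isErrorBar_ballSum_eq_errorBarWidth (hωMunit : ∀ ω ∈ Ω, ⟪ωM, ω⟫ = 1)
    {ft : A → E} (hsum : ∑ x, ft x = ωM) (hft : ∀ x, ∀ ω ∈ Ω, 0 ≤ ⟪ft x, ω⟫)
    (f : A → E) {ε : ℝ} (hε : 0 ≤ ε) :
    ∃ w, IsErrorBar Ω ft f ε w ∧ ∀ (f' : A → E) (ω : E) (a : A),
      ballSum f' ω a w = ballSum f' ω a (errorBarWidth Ω ft f ε) := by
  set W := errorBarWidth Ω ft f ε
  have hne : {w | 0 < w ∧ IsErrorBar Ω ft f ε w}.Nonempty := by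
    obtain ⟨w, hw, hw0⟩ :=
      ((eventually_forall_dist_le (A := A)).and (eventually_gt_atTop 0)).exists
    refine ⟨w, hw0, fun a ω hω _ => ?_⟩
    rw [ballSum_eq_inner_sum (hw · a), hsum, hωMunit ω hω]
    linarith
  obtain ⟨w, hball, hWw⟩ :=
    ((eventually_ballSum_eq (A := A) (E := E) W).and self_mem_nhdsWithin).exists
  obtain ⟨s, ⟨-, hs⟩, hsw⟩ := exists_lt_of_csInf_lt hne hWw
  exact ⟨w, hs.mono hft hsw.le, hball⟩

variable {f : A → E}

theorem IsMeasurement.ballSum_le_one (hωMunit : ∀ ω ∈ Ω, ⟪ωM, ω⟫ = 1)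
    (hf : IsMeasurement Ω ωM f) {ω : E} (hω : ω ∈ Ω) (a : A) (w : ℝ) : ballSum f ω a w ≤ 1 :=
  (ballSum_le_inner_sum (fun x => ((hf.1 x).2 ω hω).1) a w).trans_eq (by rw [hf.2, hωMunit ω hω])

theorem IsIdeal.mul_le_ballSum (hsd : SelfDualCone Ω) (hωMnorm : ‖ωM‖ = 1)
    (hωMunit : ∀ ω ∈ Ω, ⟪ωM, ω⟫ = 1) (hF : IsIdeal Ω ωM f) {ft : A → E} {ε w : ℝ}
    (h : IsErrorBar Ω ft f ε w) (a : A) :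
    (1 - ε) * ⟪ωM, f a⟫ ≤ ballSum ft (f a) a w := by
  obtain ⟨hs, ω, hω, hfaω, hfa⟩ := hF.exists_mem_inner_eq_one hsd hωMnorm hωMunit a
  rw [hfa, ballSum_smul, ← hfa, mul_comm]
  exact mul_le_mul_of_nonneg_left (h a ω hω hfaω) hs.le

theorem IsIdeal.one_sub_le_sum_ballSum (hsd : SelfDualCone Ω) (hωMnorm : ‖ωM‖ = 1)
    (hωMunit : ∀ ω ∈ Ω, ⟪ωM, ω⟫ = 1) (hF : IsIdeal Ω ωM f) {ft : A → E} {ε w : ℝ}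
    (h : IsErrorBar Ω ft f ε w) :
    1 - ε ≤ ∑ x, ballSum f (ft x) x w := by
  calc 1 - ε = ∑ a, (1 - ε) * ⟪ωM, f a⟫ := by
        rw [← mul_sum, ← inner_sum, hF.1.2, inner_self_eq_one_of_norm_eq_one hωMnorm, mul_one]
    _ ≤ ∑ a, ballSum ft (f a) a w :=
        sum_le_sum fun a _ => hF.mul_le_ballSum hsd hωMnorm hωMunit h a
    _ = ∑ x, ballSum f (ft x) x w := (sum_ballSum_comm f ft w).symm

end Widths

section Marginals

variable {E : Type*} [NormedAddCommGroup E] [InnerProductSpace ℝ E] {Ω : Set E} {ωM : E}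
  {A B : Type*} [Fintype A] [Fintype B] {m : A × B → E}

theorem IsMeasurement.sum_margF (hM : IsMeasurement Ω ωM m) : ∑ x, margF m x = ωM := by
  rw [← hM.2, Fintype.sum_prod_type]
  rfl

theorem IsMeasurement.sum_margG (hM : IsMeasurement Ω ωM m) : ∑ y, margG m y = ωM := by
  rw [← hM.2, Fintype.sum_prod_type_right]
  rfl

theorem IsMeasurement.inner_margF_nonneg (hM : IsMeasurement Ω ωM m) (x : A) {ω : E}
    (hω : ω ∈ Ω) : 0 ≤ ⟪margF m x, ω⟫ := by
  rw [margF, sum_inner]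
  exact sum_nonneg fun y _ => ((hM.1 (x, y)).2 ω hω).1

theorem IsMeasurement.inner_margG_nonneg (hM : IsMeasurement Ω ωM m) (y : B) {ω : E}
    (hω : ω ∈ Ω) : 0 ≤ ⟪margG m y, ω⟫ := by
  rw [margG, sum_inner]
  exact sum_nonneg fun x _ => ((hM.1 (x, y)).2 ω hω).1

end Marginals

/-- The union bound, for the probability weights `t`. -/
theorem exists_le_of_le_sum_mul {ι : Type*} [Fintype ι] {t u v : ι → ℝ} {ε₁ ε₂ : ℝ}
    (ht : ∀ i, 0 < t i) (hu : ∀ i, u i ≤ 1) (hv : ∀ i, v i ≤ 1) (hsum : ∑ i, t i = 1)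
    (hu₁ : 1 - ε₁ ≤ ∑ i, t i * u i) (hv₂ : 1 - ε₂ ≤ ∑ i, t i * v i) :
    ∃ i, 1 - (ε₁ + ε₂) ≤ u i ∧ 1 - (ε₁ + ε₂) ≤ v i := by
  have hne : (univ : Finset ι).Nonempty := nonempty_of_sum_ne_zero (hsum ▸ one_ne_zero)
  have hmean : ∑ i, t i * (2 - (ε₁ + ε₂)) ≤ ∑ i, t i * (u i + v i) := by
    simp only [← sum_mul, mul_add, sum_add_distrib, hsum]
    linarith
  obtain ⟨i, -, hi⟩ := exists_le_of_sum_le hne hmean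
  have := le_of_mul_le_mul_left hi (ht i)
  exact ⟨i, by linarith [hv i], by linarith [hu i]⟩

theorem preparation_implies_measurement_errorBar_general
    {V : Type*} [NormedAddCommGroup V] [InnerProductSpace ℝ V]
    {Ω : Set V} (hsd : SelfDualCone Ω)
    {ωM : V} (hωMnorm : ‖ωM‖ = 1) (hωMunit : ∀ ω ∈ Ω, ⟪ωM, ω⟫ = 1)
    {A B : Type*} [Fintype A] [MetricSpace A] [Fintype B] [MetricSpace B]
    {f : A → V} {g : B → V} (hF : IsIdeal Ω ωM f) (hG : IsIdeal Ω ωM g)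
    {m : A × B → V} (hM : IsMeasurement Ω ωM m)
    {ε₁ ε₂ : ℝ} (hε₁ : ε₁ ∈ Set.Icc (0 : ℝ) 1) (hε₂ : ε₂ ∈ Set.Icc (0 : ℝ) 1) :
    ∃ ω ∈ Ω,
      overallWidth f ω (ε₁ + ε₂) ≤ errorBarWidth Ω (margF m) f ε₁ ∧
      overallWidth g ω (ε₁ + ε₂) ≤ errorBarWidth Ω (margG m) g ε₂ := by
  obtain ⟨w₁, hw₁, hball₁⟩ := exists_isErrorBar_ballSum_eq_errorBarWidth hωMunit hM.sum_margF
    hM.inner_margF_nonneg f hε₁.1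
  obtain ⟨w₂, hw₂, hball₂⟩ := exists_isErrorBar_ballSum_eq_errorBarWidth hωMunit hM.sum_margG
    hM.inner_margG_nonneg g hε₂.1
  choose ht ω hω hmω using fun p => exists_mem_eq_inner_smul_of_mem_posCone hωMunit
    (hsd.mem_posCone_of_isEffect (hM.1 p).2) (hM.1 p).1
  have hsum : ∑ p, ⟪ωM, m p⟫ = 1 := by
    rw [← inner_sum, hM.2, inner_self_eq_one_of_norm_eq_one hωMnorm]
  obtain ⟨p, hp₁, hp₂⟩ := exists_le_of_le_sum_mul ht
    (fun p => hF.1.ballSum_le_one hωMunit (hω p) p.1 w₁)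
    (fun p => hG.1.ballSum_le_one hωMunit (hω p) p.2 w₂) hsum
    ((hF.one_sub_le_sum_ballSum hsd hωMnorm hωMunit hw₁).trans_eq
      ((sum_ballSum_fst f m w₁).symm.trans (sum_ballSum_eq_sum_mul f hmω Prod.fst w₁)))
    ((hG.one_sub_le_sum_ballSum hsd hωMnorm hωMunit hw₂).trans_eq
      ((sum_ballSum_snd g m w₂).symm.trans (sum_ballSum_eq_sum_mul g hmω Prod.snd w₂)))
  refine ⟨ω p, hω p, ?_, ?_⟩
  · rw [hball₁] at hp₁
    exact overallWidth_le_of_le_ballSum (fun a => ((hF.1.1 a).2 _ (hω p)).1)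
      (errorBarWidth_nonneg _ _ _) hp₁
  · rw [hball₂] at hp₂
    exact overallWidth_le_of_le_ballSum (fun b => ((hG.1.1 b).2 _ (hω p)).1)
      (errorBarWidth_nonneg _ _ _) hp₂

/-- **Theorem 1 (paper).** In a transitive, self-dual GPT, for any approximate joint
measurement of a pair of ideal measurements, the error bar widths are bounded below by
the overall widths of some state. -/
theorem preparation_implies_measurement_errorBar
    {V : Type*} [NormedAddCommGroup V] [InnerProductSpace ℝ V] [FiniteDimensional ℝ V]
    {Ω : Set V} (hΩ : IsStateSpace Ω) (htrans : IsTransitive Ω)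
    (hinv : InvariantInner Ω) (hsd : SelfDualCone Ω)
    {ωM : V} (hωMΩ : ωM ∈ Ω) (hωMfix : ∀ T ∈ autGroup Ω, T ωM = ωM)
    (hωMnorm : ‖ωM‖ = 1) (hωMunit : ∀ ω ∈ Ω, ⟪ωM, ω⟫ = 1)
    {A B : Type*} [Fintype A] [MetricSpace A] [Fintype B] [MetricSpace B]
    {f : A → V} {g : B → V} (hF : IsIdeal Ω ωM f) (hG : IsIdeal Ω ωM g)
    {m : A × B → V} (hM : IsMeasurement Ω ωM m)
    {ε₁ ε₂ : ℝ} (hε₁ : ε₁ ∈ Set.Icc (0 : ℝ) 1) (hε₂ : ε₂ ∈ Set.Icc (0 : ℝ) 1)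
    (hε : ε₁ + ε₂ ≤ 1) :
    ∃ ω ∈ Ω,
      overallWidth f ω (ε₁ + ε₂) ≤ errorBarWidth Ω (margF m) f ε₁ ∧
      overallWidth g ω (ε₁ + ε₂) ≤ errorBarWidth Ω (margG m) g ε₂ :=
  preparation_implies_measurement_errorBar_general hsd hωMnorm hωMunit hF hG hM hε₁ hε₂
end

section
/- Let Ω ⊆ V be a transitive state space whose inner product ⟪·,·⟫ is GL(Ω)-invariant and whose positive cone V₊ is self-dual with respect to ⟪·,·⟫, and let ω_M be a GL(Ω)-invariant state with ‖ω_M‖ = 1 and ⟪ω_M, ω⟫ = 1 for all ω ∈ Ω. Let F and G be ideal measurements with outcome sets finite metric spaces (A, d_A) and (B, d_B), let M̃ be an approximate joint measurement of (F, G) with marginals M̃^F and M̃^G, and let ε₁, ε₂ ∈ (0,1] satisfy ε₁ + ε₂ ≤ 1. Then there exists a state ω ∈ Ω such that D_W(M̃^F, F) ≥ (ε₁/2) · W_{ε₁+ε₂}(ω^F) and D_W(M̃^G, G) ≥ (ε₂/2) · W_{ε₁+ε₂}(ω^G). -/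
open RealInnerProductSpace

variable {V : Type*} [NormedAddCommGroup V] [InnerProductSpace ℝ V] [FiniteDimensional ℝ V]

section AuxHelpers

variable {V : Type*} [NormedAddCommGroup V] [InnerProductSpace ℝ V] [FiniteDimensional ℝ V]

private lemma aux_abs_min_sub_min (a b c : ℝ) : |min a c - min b c| ≤ |a - b| := by
  rw [abs_sub_le_iff]
  constructor
  · have h1 : min a c ≤ min (b + |a - b|) (c + |a - b|) :=
      min_le_min (by linarith [le_abs_self (a - b)]) (by linarith [abs_nonneg (a - b)])
    rw [min_add_add_right] at h1
    linarith
  · have h1 : min b c ≤ min (a + |a - b|) (c + |a - b|) :=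
      min_le_min (by linarith [neg_abs_le (a - b)]) (by linarith [abs_nonneg (a - b)])
    rw [min_add_add_right] at h1
    linarith

private lemma aux_memPosCone {Ω : Set V} {ω : V} (hω : ω ∈ Ω) : ω ∈ posCone Ω :=
  ⟨1, ω, hω, zero_le_one, (one_smul ℝ ω).symm⟩

private lemma aux_posCone_inner_nonneg {Ω : Set V} (hsd : SelfDualCone Ω) {x y : V}
    (hx : x ∈ posCone Ω) (hy : y ∈ posCone Ω) : 0 ≤ ⟪x, y⟫ := by
  rw [SelfDualCone] at hsd
  rw [hsd] at hy
  exact hy x hx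

private lemma aux_effect_mem_posCone {Ω : Set V} (hsd : SelfDualCone Ω) {e : V}
    (he : IsEffect Ω e) : e ∈ posCone Ω := by
  rw [SelfDualCone] at hsd; rw [hsd]
  rintro x ⟨l, ω, hω, hl, rfl⟩
  rw [real_inner_smul_left]
  exact mul_nonneg hl (by rw [real_inner_comm]; exact (he ω hω).1)

private lemma aux_effect_decomp {Ω : Set V} (hsd : SelfDualCone Ω) {ωM : V}
    (hωMunit : ∀ ω ∈ Ω, ⟪ωM, ω⟫ = 1) {e : V} (he : IsEffect Ω e) (hne : e ≠ 0) :
    ∃ l ω₀, 0 < l ∧ ω₀ ∈ Ω ∧ e = l • ω₀ ∧ ⟪ωM, e⟫ = l := by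
  obtain ⟨l, ω₀, hω₀, hl0, hdec⟩ := aux_effect_mem_posCone hsd he
  have hlval : ⟪ωM, e⟫ = l := by
    rw [hdec, real_inner_smul_right, hωMunit _ hω₀, mul_one]
  rcases hl0.eq_or_lt with h | h
  · exact absurd (by rw [hdec, ← h, zero_smul]) hne
  · exact ⟨l, ω₀, h, hω₀, hdec, hlval⟩

private lemma aux_ideal_sharp {Ω : Set V} (hsd : SelfDualCone Ω) {ωM : V} (hωMΩ : ωM ∈ Ω)
    (hωMunit : ∀ ω ∈ Ω, ⟪ωM, ω⟫ = 1) {A : Type*} [Fintype A] {f : A → V}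
    (hF : IsIdeal Ω ωM f) (a : A) :
    ∃ (q : ℝ) (ω₀ : V), 0 < q ∧ ω₀ ∈ Ω ∧ f a = q • ω₀ ∧ ⟪f a, ω₀⟫ = 1 := by
  classical
  obtain ⟨hmeas, c, hc, hext, hSa⟩ := hF
  have hne : f a ≠ 0 := (hmeas.1 a).1
  have heff : IsEffect Ω (f a) := (hmeas.1 a).2
  obtain ⟨S, hS, hcase⟩ := hSa a
  have hc2 : (0:ℝ) < c ^ 2 := by positivity
  have hSΩ : ∀ ω' ∈ S, ω' ∈ Ω := fun ω' h =>
    extremePoints_subset (hS (Finset.mem_coe.mpr h))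
  have hrow : ∀ ω' ∈ S, ∑ ω'' ∈ S, ⟪ω'', ω'⟫ = c ^ 2 := by
    intro ω' hω'
    have hdiag : ⟪ω', ω'⟫ = c ^ 2 := by
      have hn := hext ω' (hS (Finset.mem_coe.mpr hω'))
      rw [real_inner_self_eq_norm_mul_norm, hn]; ring
    have hsplit : ∑ ω'' ∈ S, ⟪ω'', ω'⟫ = ⟪ω', ω'⟫ + ∑ ω'' ∈ S.erase ω', ⟪ω'', ω'⟫ :=
      (Finset.add_sum_erase S _ hω').symm
    have hrest : 0 ≤ ∑ ω'' ∈ S.erase ω', ⟪ω'', ω'⟫ :=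
      Finset.sum_nonneg fun ω'' h'' =>
        aux_posCone_inner_nonneg hsd (aux_memPosCone (hSΩ _ (Finset.mem_of_mem_erase h'')))
          (aux_memPosCone (hSΩ _ hω'))
    have hup : ∑ ω'' ∈ S, ⟪ω'', ω'⟫ ≤ c ^ 2 := by
      rcases hcase with h1 | h2
      · have hb := (heff ω' (hSΩ _ hω')).2
        rw [h1, real_inner_smul_left, sum_inner] at hb
        have hb2 := mul_le_mul_of_nonneg_left hb hc2.le
        rw [← mul_assoc, mul_inv_cancel₀ (ne_of_gt hc2), one_mul, mul_one] at hb2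
        exact hb2
      · have hb := (heff ω' (hSΩ _ hω')).1
        rw [h2, inner_sub_left, real_inner_smul_left, sum_inner,
          hωMunit _ (hSΩ _ hω')] at hb
        have hb1 : (c ^ 2)⁻¹ * ∑ i ∈ S, ⟪i, ω'⟫ ≤ 1 := by linarith
        have hb2 := mul_le_mul_of_nonneg_left hb1 hc2.le
        rw [← mul_assoc, mul_inv_cancel₀ (ne_of_gt hc2), one_mul, mul_one] at hb2
        exact hb2
    linarith
  have hXX : ⟪∑ ω'' ∈ S, ω'', ∑ ω' ∈ S, ω'⟫ = (S.card : ℝ) * c ^ 2 := by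
    rw [inner_sum]
    calc ∑ ω' ∈ S, ⟪∑ ω'' ∈ S, ω'', ω'⟫ = ∑ ω' ∈ S, (c:ℝ) ^ 2 := by
          refine Finset.sum_congr rfl fun ω' hω' => ?_
          rw [sum_inner]; exact hrow ω' hω'
      _ = (S.card : ℝ) * c ^ 2 := by rw [Finset.sum_const, nsmul_eq_mul]
  have hωMX : ⟪ωM, ∑ ω' ∈ S, ω'⟫ = (S.card : ℝ) := by
    rw [inner_sum]
    rw [Finset.sum_congr rfl fun ω' hω' => hωMunit _ (hSΩ _ hω')]
    simp
  have hkey : ⟪f a, f a⟫ = ⟪ωM, f a⟫ := by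
    rcases hcase with h1 | h1 <;> rw [h1]
    · rw [real_inner_smul_left, real_inner_smul_right, real_inner_smul_right, hXX, hωMX]
      field_simp
    · rw [real_inner_sub_sub_self, inner_sub_right, real_inner_smul_right,
        real_inner_smul_right, real_inner_smul_left, hXX, hωMX, hωMunit _ hωMΩ]
      field_simp
      ring
  obtain ⟨l, ω₀, hl, hω₀, hdec, hlval⟩ := aux_effect_decomp hsd hωMunit heff hne
  refine ⟨l, ω₀, hl, hω₀, hdec, ?_⟩
  have h2 : l * ⟪f a, ω₀⟫ = ⟪f a, f a⟫ := by
    rw [← real_inner_smul_right, ← hdec]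
  exact mul_left_cancel₀ (ne_of_gt hl) (by rw [h2, hkey, hlval, mul_one])

private lemma aux_wernerD_bddAbove {Ω : Set V} {ωM : V}
    (hωMunit : ∀ ω ∈ Ω, ⟪ωM, ω⟫ = 1)
    {A : Type*} [Fintype A] [MetricSpace A] [Nonempty A] {ft f : A → V}
    (hft0 : ∀ x, ∀ ω ∈ Ω, 0 ≤ ⟪ft x, ω⟫) (hftsum : ∑ x, ft x = ωM)
    (hf : ∀ x, IsEffect Ω (f x)) (hfsum : ∑ x, f x = ωM) :
    BddAbove {d : ℝ | ∃ ω ∈ Ω, ∃ h : A → ℝ, (∀ a₁ a₂ : A, |h a₁ - h a₂| ≤ dist a₁ a₂) ∧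
      d = |∑ a, h a * (⟪ft a, ω⟫ - ⟪f a, ω⟫)|} := by
  obtain ⟨a₀⟩ := ‹Nonempty A›
  refine ⟨2 * Finset.univ.sup' Finset.univ_nonempty (fun x => dist x a₀), ?_⟩
  rintro d ⟨ω, hω, h, hLip, rfl⟩
  have hzero : ∑ x, (⟪ft x, ω⟫ - ⟪f x, ω⟫) = 0 := by
    rw [Finset.sum_sub_distrib, ← sum_inner, ← sum_inner, hftsum, hfsum, sub_self]
  have hrw : ∑ x, (h x - h a₀) * (⟪ft x, ω⟫ - ⟪f x, ω⟫)
      = ∑ x, h x * (⟪ft x, ω⟫ - ⟪f x, ω⟫) := by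
    rw [Finset.sum_congr rfl (fun x _ => sub_mul (h x) (h a₀) _), Finset.sum_sub_distrib,
      ← Finset.mul_sum, hzero, mul_zero, sub_zero]
  rw [← hrw]
  calc |∑ x, (h x - h a₀) * (⟪ft x, ω⟫ - ⟪f x, ω⟫)|
      ≤ ∑ x, |(h x - h a₀) * (⟪ft x, ω⟫ - ⟪f x, ω⟫)| := Finset.abs_sum_le_sum_abs _ _
    _ ≤ ∑ x, (Finset.univ.sup' Finset.univ_nonempty (fun y => dist y a₀))
          * (⟪ft x, ω⟫ + ⟪f x, ω⟫) := by
        refine Finset.sum_le_sum fun x _ => ?_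
        rw [abs_mul]
        have h1 : |h x - h a₀| ≤ Finset.univ.sup' Finset.univ_nonempty (fun y => dist y a₀) :=
          le_trans (hLip x a₀) (Finset.le_sup' (fun y => dist y a₀) (Finset.mem_univ x))
        have h2 : |⟪ft x, ω⟫ - ⟪f x, ω⟫| ≤ ⟪ft x, ω⟫ + ⟪f x, ω⟫ := by
          rw [abs_sub_le_iff]
          constructor <;> linarith [hft0 x ω hω, (hf x ω hω).1]
        exact mul_le_mul h1 h2 (abs_nonneg _) (le_trans (abs_nonneg _) h1)
    _ = _ := by
        rw [← Finset.mul_sum, Finset.sum_add_distrib, ← sum_inner, ← sum_inner, hftsum, hfsum,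
          hωMunit _ hω]
        ring

private lemma aux_wernerD_nonneg {Ω : Set V} {ωM : V} (hωMΩ : ωM ∈ Ω)
    (hωMunit : ∀ ω ∈ Ω, ⟪ωM, ω⟫ = 1)
    {A : Type*} [Fintype A] [MetricSpace A] [Nonempty A] {ft f : A → V}
    (hft0 : ∀ x, ∀ ω ∈ Ω, 0 ≤ ⟪ft x, ω⟫) (hftsum : ∑ x, ft x = ωM)
    (hf : ∀ x, IsEffect Ω (f x)) (hfsum : ∑ x, f x = ωM) :
    0 ≤ wernerD Ω ft f := by
  unfold wernerD
  refine le_csSup (aux_wernerD_bddAbove hωMunit hft0 hftsum hf hfsum) ?_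
  exact ⟨ωM, hωMΩ, fun _ => 0, by simp [dist_nonneg], by simp⟩

private lemma aux_werner_tail {Ω : Set V} {ωM : V} (hωMΩ : ωM ∈ Ω)
    (hωMunit : ∀ ω ∈ Ω, ⟪ωM, ω⟫ = 1)
    {A : Type*} [Fintype A] [MetricSpace A] [Nonempty A] {ft f : A → V}
    (hft0 : ∀ x, ∀ ω ∈ Ω, 0 ≤ ⟪ft x, ω⟫) (hftsum : ∑ x, ft x = ωM)
    (hf : ∀ x, IsEffect Ω (f x)) (hfsum : ∑ x, f x = ωM)
    {a : A} {ω₀ : V} (hω₀ : ω₀ ∈ Ω) (hsharp : ⟪f a, ω₀⟫ = 1)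
    {ε' : ℝ} (hε' : 0 < ε') :
    ∑ x ∈ Finset.univ.filter (fun x => ¬ dist a x ≤ wernerD Ω ft f / ε'), ⟪ft x, ω₀⟫ ≤ ε' := by
  classical
  have hbdd := aux_wernerD_bddAbove hωMunit hft0 hftsum hf hfsum
  have hD0 : 0 ≤ wernerD Ω ft f := aux_wernerD_nonneg hωMΩ hωMunit hft0 hftsum hf hfsum
  -- the sharp distribution is a point mass at `a`
  have hp0 : ∀ x, x ≠ a → ⟪f x, ω₀⟫ = 0 := by
    have hsum1 : ∑ x, ⟪f x, ω₀⟫ = 1 := by rw [← sum_inner, hfsum, hωMunit _ hω₀]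
    have hkey : ∑ x ∈ Finset.univ.erase a, ⟪f x, ω₀⟫ = 0 := by
      have hh : ⟪f a, ω₀⟫ + ∑ x ∈ Finset.univ.erase a, ⟪f x, ω₀⟫ = ∑ x, ⟪f x, ω₀⟫ :=
        Finset.add_sum_erase Finset.univ (fun x => ⟪f x, ω₀⟫) (Finset.mem_univ a)
      rw [hsum1, hsharp] at hh
      linarith
    intro x hx
    have hnn : ∀ y ∈ Finset.univ.erase a, 0 ≤ ⟪f y, ω₀⟫ := fun y _ => (hf y ω₀ hω₀).1
    exact (Finset.sum_eq_zero_iff_of_nonneg hnn).1 hkey x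
      (Finset.mem_erase.2 ⟨hx, Finset.mem_univ x⟩)
  -- Werner's tail estimate
  have hW : ∀ s : ℝ, 0 < s →
      s * ∑ x ∈ Finset.univ.filter (fun x => s ≤ dist a x), ⟪ft x, ω₀⟫ ≤ wernerD Ω ft f := by
    intro s hs
    have hLip : ∀ a₁ a₂ : A, |min (dist a a₁) s - min (dist a a₂) s| ≤ dist a₁ a₂ := by
      intro a₁ a₂
      refine le_trans (aux_abs_min_sub_min _ _ _) ?_
      rw [dist_comm a a₁, dist_comm a a₂]
      exact abs_dist_sub_le a₁ a₂ a
    have hle : |∑ x, min (dist a x) s * (⟪ft x, ω₀⟫ - ⟪f x, ω₀⟫)| ≤ wernerD Ω ft f := by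
      unfold wernerD
      exact le_csSup hbdd ⟨ω₀, hω₀, fun x => min (dist a x) s, hLip, rfl⟩
    have hfp : ∑ x, min (dist a x) s * ⟪f x, ω₀⟫ = 0 := by
      refine Finset.sum_eq_zero fun x _ => ?_
      by_cases hx : x = a
      · subst hx; simp [dist_self, min_eq_left hs.le]
      · rw [hp0 x hx, mul_zero]
    have hsimp : ∑ x, min (dist a x) s * (⟪ft x, ω₀⟫ - ⟪f x, ω₀⟫)
        = ∑ x, min (dist a x) s * ⟪ft x, ω₀⟫ := by
      rw [Finset.sum_congr rfl fun x _ => mul_sub (min (dist a x) s) _ _,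
        Finset.sum_sub_distrib, hfp, sub_zero]
    have hnn : 0 ≤ ∑ x, min (dist a x) s * ⟪ft x, ω₀⟫ :=
      Finset.sum_nonneg fun x _ => mul_nonneg (le_min dist_nonneg hs.le) (hft0 x ω₀ hω₀)
    have hlow : s * ∑ x ∈ Finset.univ.filter (fun x => s ≤ dist a x), ⟪ft x, ω₀⟫
        ≤ ∑ x, min (dist a x) s * ⟪ft x, ω₀⟫ := by
      rw [Finset.mul_sum]
      refine le_trans (le_of_eq (Finset.sum_congr rfl fun x hx => ?_))
        (Finset.sum_le_sum_of_subset_of_nonneg (Finset.filter_subset _ _)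
          (fun x _ _ => mul_nonneg (le_min dist_nonneg hs.le) (hft0 x ω₀ hω₀)))
      rw [min_eq_right (Finset.mem_filter.1 hx).2]
    calc s * ∑ x ∈ Finset.univ.filter (fun x => s ≤ dist a x), ⟪ft x, ω₀⟫
        ≤ ∑ x, min (dist a x) s * ⟪ft x, ω₀⟫ := hlow
      _ = |∑ x, min (dist a x) s * (⟪ft x, ω₀⟫ - ⟪f x, ω₀⟫)| := by
          rw [hsimp, abs_of_nonneg hnn]
      _ ≤ wernerD Ω ft f := hle
  rcases hD0.eq_or_lt with hDz | hDpos
  · have hzero : ∀ x ∈ Finset.univ.filter (fun x => ¬ dist a x ≤ wernerD Ω ft f / ε'),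
        ⟪ft x, ω₀⟫ = 0 := by
      intro x hx
      have hd : 0 < dist a x := by
        have hxx := (Finset.mem_filter.1 hx).2
        rw [← hDz, zero_div] at hxx
        exact lt_of_not_ge fun hc => hxx (le_trans (le_of_eq rfl) hc)
      have hWx := hW (dist a x) hd
      rw [← hDz] at hWx
      have hT0 : 0 ≤ ∑ y ∈ Finset.univ.filter (fun y => dist a x ≤ dist a y), ⟪ft y, ω₀⟫ :=
        Finset.sum_nonneg fun y _ => hft0 y ω₀ hω₀
      have hTz : ∑ y ∈ Finset.univ.filter (fun y => dist a x ≤ dist a y), ⟪ft y, ω₀⟫ = 0 := by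
        nlinarith
      have hmem : x ∈ Finset.univ.filter (fun y => dist a x ≤ dist a y) := by
        simp
      have hone : ⟪ft x, ω₀⟫
          ≤ ∑ y ∈ Finset.univ.filter (fun y => dist a x ≤ dist a y), ⟪ft y, ω₀⟫ :=
        Finset.single_le_sum (fun y _ => hft0 y ω₀ hω₀) hmem
      have := hft0 x ω₀ hω₀
      linarith
    rw [Finset.sum_eq_zero hzero]
    exact hε'.le
  · have ht : 0 < wernerD Ω ft f / ε' := div_pos hDpos hε'
    have hsub : Finset.univ.filter (fun x => ¬ dist a x ≤ wernerD Ω ft f / ε') ⊆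
        Finset.univ.filter (fun x => wernerD Ω ft f / ε' ≤ dist a x) := by
      intro x hx
      simp only [Finset.mem_filter, Finset.mem_univ, true_and] at *
      exact le_of_lt (not_le.1 hx)
    have hchain := Finset.sum_le_sum_of_subset_of_nonneg hsub
      (fun x _ _ => hft0 x ω₀ hω₀)
    have hWt := hW (wernerD Ω ft f / ε') ht
    have h1 : ∑ x ∈ Finset.univ.filter (fun x => wernerD Ω ft f / ε' ≤ dist a x), ⟪ft x, ω₀⟫
        ≤ wernerD Ω ft f / (wernerD Ω ft f / ε') := by
      rw [le_div_iff₀ ht]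
      linarith [hWt]
    have h2 : wernerD Ω ft f / (wernerD Ω ft f / ε') = ε' := by
      field_simp
    linarith

private lemma aux_width_le {A : Type*} [Fintype A] [MetricSpace A] {f : A → V} {ω₀ : V}
    {ε ε' D : ℝ} (hε' : 0 < ε') (hD : 0 ≤ D) {a₀ : A}
    (hball : ∀ w : ℝ, 2 * (D / ε') ≤ w → 1 - ε ≤ ballSum f ω₀ a₀ w) :
    (ε' / 2) * overallWidth f ω₀ ε ≤ D := by
  unfold overallWidth
  have hbdd : BddBelow {w : ℝ | 0 < w ∧ ∃ a : A, 1 - ε ≤ ballSum f ω₀ a w} :=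
    ⟨0, fun x hx => le_of_lt hx.1⟩
  rcases (div_nonneg hD hε'.le).eq_or_lt with h0 | hpos
  · have hWle : ∀ w : ℝ, 0 < w →
        sInf {w : ℝ | 0 < w ∧ ∃ a : A, 1 - ε ≤ ballSum f ω₀ a w} ≤ w := fun w hw =>
      csInf_le hbdd ⟨hw, a₀, hball w (by rw [← h0]; linarith)⟩
    have hW0 : sInf {w : ℝ | 0 < w ∧ ∃ a : A, 1 - ε ≤ ballSum f ω₀ a w} ≤ 0 := by
      by_contra hc
      push_neg at hc
      have := hWle (sInf {w : ℝ | 0 < w ∧ ∃ a : A, 1 - ε ≤ ballSum f ω₀ a w} / 2)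
        (by linarith)
      linarith
    calc (ε' / 2) * sInf {w : ℝ | 0 < w ∧ ∃ a : A, 1 - ε ≤ ballSum f ω₀ a w} ≤ 0 :=
        mul_nonpos_of_nonneg_of_nonpos (by linarith) hW0
      _ ≤ D := hD
  · have hmem : (2 * (D / ε')) ∈ {w : ℝ | 0 < w ∧ ∃ a : A, 1 - ε ≤ ballSum f ω₀ a w} :=
      ⟨by linarith, a₀, hball _ le_rfl⟩
    have hle := csInf_le hbdd hmem
    calc (ε' / 2) * sInf {w : ℝ | 0 < w ∧ ∃ a : A, 1 - ε ≤ ballSum f ω₀ a w}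
        ≤ (ε' / 2) * (2 * (D / ε')) := mul_le_mul_of_nonneg_left hle (by linarith)
      _ = D := by field_simp

end AuxHelpers
/-- **Corollary 1 (paper).** In a transitive, self-dual GPT, Werner's measure for the
marginals of any approximate joint measurement of two ideal measurements is bounded
below by (ε/2 times) the overall widths of some state. -/
theorem preparation_implies_measurement_werner
    {V : Type*} [NormedAddCommGroup V] [InnerProductSpace ℝ V] [FiniteDimensional ℝ V]
    {Ω : Set V} (hΩ : IsStateSpace Ω) (htrans : IsTransitive Ω)
    (hinv : InvariantInner Ω) (hsd : SelfDualCone Ω)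
    {ωM : V} (hωMΩ : ωM ∈ Ω) (hωMfix : ∀ T ∈ autGroup Ω, T ωM = ωM)
    (hωMnorm : ‖ωM‖ = 1) (hωMunit : ∀ ω ∈ Ω, ⟪ωM, ω⟫ = 1)
    {A B : Type*} [Fintype A] [MetricSpace A] [Fintype B] [MetricSpace B]
    {f : A → V} {g : B → V} (hF : IsIdeal Ω ωM f) (hG : IsIdeal Ω ωM g)
    {m : A × B → V} (hM : IsMeasurement Ω ωM m)
    {ε₁ ε₂ : ℝ} (hε₁ : ε₁ ∈ Set.Ioc (0 : ℝ) 1) (hε₂ : ε₂ ∈ Set.Ioc (0 : ℝ) 1)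
    (hε : ε₁ + ε₂ ≤ 1) :
    ∃ ω ∈ Ω,
      (ε₁ / 2) * overallWidth f ω (ε₁ + ε₂) ≤ wernerD Ω (margF m) f ∧
      (ε₂ / 2) * overallWidth g ω (ε₁ + ε₂) ≤ wernerD Ω (margG m) g := by
  obtain ⟨hm1, hm2⟩ := hM
  -- A and B are nonempty
  have hA : Nonempty A := by
    by_contra hA
    rw [not_nonempty_iff] at hA
    have h0 := hF.1.2
    rw [Finset.univ_eq_empty, Finset.sum_empty] at h0
    rw [← h0, norm_zero] at hωMnorm
    norm_num at hωMnorm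
  have hB : Nonempty B := by
    by_contra hB
    rw [not_nonempty_iff] at hB
    have h0 := hG.1.2
    rw [Finset.univ_eq_empty, Finset.sum_empty] at h0
    rw [← h0, norm_zero] at hωMnorm
    norm_num at hωMnorm
  -- sharp states of the ideal measurements
  choose qf ωf hqf hωf hfd hfs using fun a => aux_ideal_sharp hsd hωMΩ hωMunit hF a
  choose qg ωg hqg hωg hgd hgs using fun b => aux_ideal_sharp hsd hωMΩ hωMunit hG b
  -- marginal measurement facts
  have hmF0 : ∀ x : A, ∀ ω ∈ Ω, 0 ≤ ⟪margF m x, ω⟫ := by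
    intro x ω hω
    simp only [margF]
    rw [sum_inner]
    exact Finset.sum_nonneg fun b _ => ((hm1 (x, b)).2 ω hω).1
  have hmFsum : ∑ x, margF m x = ωM := by
    simp only [margF]
    rw [← Fintype.sum_prod_type]
    exact hm2
  have hmG0 : ∀ y : B, ∀ ω ∈ Ω, 0 ≤ ⟪margG m y, ω⟫ := by
    intro y ω hω
    simp only [margG]
    rw [sum_inner]
    exact Finset.sum_nonneg fun x _ => ((hm1 (x, y)).2 ω hω).1
  have hmGsum : ∑ y, margG m y = ωM := by
    simp only [margG]
    rw [Finset.sum_comm, ← Fintype.sum_prod_type]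
    exact hm2
  have hfeff : ∀ x : A, IsEffect Ω (f x) := fun x => (hF.1.1 x).2
  have hgeff : ∀ y : B, IsEffect Ω (g y) := fun y => (hG.1.1 y).2
  have hfsum : ∑ x, f x = ωM := hF.1.2
  have hgsum : ∑ y, g y = ωM := hG.1.2
  -- totals of the weights
  have hqfsum : ∑ a, qf a = 1 := by
    have h1 : ∀ a, qf a = ⟪ωM, f a⟫ := fun a => by
      rw [hfd a, real_inner_smul_right, hωMunit _ (hωf a), mul_one]
    calc ∑ a, qf a = ∑ a, ⟪ωM, f a⟫ := Finset.sum_congr rfl fun a _ => h1 a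
      _ = ⟪ωM, ∑ a, f a⟫ := (inner_sum _ _ _).symm
      _ = 1 := by rw [hfsum, hωMunit _ hωMΩ]
  have hqgsum : ∑ b, qg b = 1 := by
    have h1 : ∀ b, qg b = ⟪ωM, g b⟫ := fun b => by
      rw [hgd b, real_inner_smul_right, hωMunit _ (hωg b), mul_one]
    calc ∑ b, qg b = ∑ b, ⟪ωM, g b⟫ := Finset.sum_congr rfl fun b _ => h1 b
      _ = ⟪ωM, ∑ b, g b⟫ := (inner_sum _ _ _).symm
      _ = 1 := by rw [hgsum, hωMunit _ hωMΩ]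
  -- the F-side total localization error
  have houtF : ∑ p : A × B, ∑ a'' ∈ Finset.univ.filter
      (fun a'' => ¬ dist a'' p.1 ≤ wernerD Ω (margF m) f / ε₁), ⟪f a'', m p⟫ ≤ ε₁ := by
    have hswap : (∑ p : A × B, ∑ a'' ∈ Finset.univ.filter
        (fun a'' => ¬ dist a'' p.1 ≤ wernerD Ω (margF m) f / ε₁), ⟪f a'', m p⟫)
        = ∑ a'' : A, ∑ x ∈ Finset.univ.filter
          (fun x => ¬ dist a'' x ≤ wernerD Ω (margF m) f / ε₁), ⟪f a'', margF m x⟫ := by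
      rw [Fintype.sum_prod_type]
      have h1 : ∀ x : A, (∑ y : B, ∑ a'' ∈ Finset.univ.filter
          (fun a'' => ¬ dist a'' x ≤ wernerD Ω (margF m) f / ε₁), ⟪f a'', m (x, y)⟫)
          = ∑ a'' ∈ Finset.univ.filter
            (fun a'' => ¬ dist a'' x ≤ wernerD Ω (margF m) f / ε₁), ⟪f a'', margF m x⟫ := by
        intro x
        rw [Finset.sum_comm]
        refine Finset.sum_congr rfl fun a'' _ => ?_
        simp only [margF]
        rw [inner_sum]
      rw [Finset.sum_congr rfl fun x _ => h1 x]
      refine Finset.sum_comm' ?_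
      intro x a''
      simp only [Finset.mem_filter, Finset.mem_univ, true_and, and_true]
    rw [hswap]
    calc ∑ a'' : A, ∑ x ∈ Finset.univ.filter
          (fun x => ¬ dist a'' x ≤ wernerD Ω (margF m) f / ε₁), ⟪f a'', margF m x⟫
        = ∑ a'' : A, qf a'' * ∑ x ∈ Finset.univ.filter
            (fun x => ¬ dist a'' x ≤ wernerD Ω (margF m) f / ε₁), ⟪margF m x, ωf a''⟫ := by
          refine Finset.sum_congr rfl fun a'' _ => ?_
          rw [Finset.mul_sum]
          refine Finset.sum_congr rfl fun x _ => ?_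
          rw [hfd a'', real_inner_smul_left, real_inner_comm]
      _ ≤ ∑ a'' : A, qf a'' * ε₁ := by
          refine Finset.sum_le_sum fun a'' _ => ?_
          exact mul_le_mul_of_nonneg_left
            (aux_werner_tail hωMΩ hωMunit hmF0 hmFsum hfeff hfsum (hωf a'') (hfs a'') hε₁.1)
            (le_of_lt (hqf a''))
      _ = ε₁ := by rw [← Finset.sum_mul, hqfsum, one_mul]
  -- the G-side total localization error
  have houtG : ∑ p : A × B, ∑ b'' ∈ Finset.univ.filter
      (fun b'' => ¬ dist b'' p.2 ≤ wernerD Ω (margG m) g / ε₂), ⟪g b'', m p⟫ ≤ ε₂ := by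
    have hswap : (∑ p : A × B, ∑ b'' ∈ Finset.univ.filter
        (fun b'' => ¬ dist b'' p.2 ≤ wernerD Ω (margG m) g / ε₂), ⟪g b'', m p⟫)
        = ∑ b'' : B, ∑ y ∈ Finset.univ.filter
          (fun y => ¬ dist b'' y ≤ wernerD Ω (margG m) g / ε₂), ⟪g b'', margG m y⟫ := by
      rw [Fintype.sum_prod_type]
      rw [Finset.sum_comm]
      have h1 : ∀ y : B, (∑ x : A, ∑ b'' ∈ Finset.univ.filter
          (fun b'' => ¬ dist b'' y ≤ wernerD Ω (margG m) g / ε₂), ⟪g b'', m (x, y)⟫)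
          = ∑ b'' ∈ Finset.univ.filter
            (fun b'' => ¬ dist b'' y ≤ wernerD Ω (margG m) g / ε₂), ⟪g b'', margG m y⟫ := by
        intro y
        rw [Finset.sum_comm]
        refine Finset.sum_congr rfl fun b'' _ => ?_
        simp only [margG]
        rw [inner_sum]
      rw [Finset.sum_congr rfl fun y _ => h1 y]
      refine Finset.sum_comm' ?_
      intro y b''
      simp only [Finset.mem_filter, Finset.mem_univ, true_and, and_true]
    rw [hswap]
    calc ∑ b'' : B, ∑ y ∈ Finset.univ.filter
          (fun y => ¬ dist b'' y ≤ wernerD Ω (margG m) g / ε₂), ⟪g b'', margG m y⟫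
        = ∑ b'' : B, qg b'' * ∑ y ∈ Finset.univ.filter
            (fun y => ¬ dist b'' y ≤ wernerD Ω (margG m) g / ε₂), ⟪margG m y, ωg b''⟫ := by
          refine Finset.sum_congr rfl fun b'' _ => ?_
          rw [Finset.mul_sum]
          refine Finset.sum_congr rfl fun y _ => ?_
          rw [hgd b'', real_inner_smul_left, real_inner_comm]
      _ ≤ ∑ b'' : B, qg b'' * ε₂ := by
          refine Finset.sum_le_sum fun b'' _ => ?_
          exact mul_le_mul_of_nonneg_left
            (aux_werner_tail hωMΩ hωMunit hmG0 hmGsum hgeff hgsum (hωg b'') (hgs b'') hε₂.1)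
            (le_of_lt (hqg b''))
      _ = ε₂ := by rw [← Finset.sum_mul, hqgsum, one_mul]
  -- total mass
  have hltot : ∑ p : A × B, ⟪ωM, m p⟫ = 1 := by
    rw [← inner_sum, hm2, hωMunit _ hωMΩ]
  -- choose a good joint outcome
  have hex : ∃ p : A × B,
      (∑ a'' ∈ Finset.univ.filter
        (fun a'' => ¬ dist a'' p.1 ≤ wernerD Ω (margF m) f / ε₁), ⟪f a'', m p⟫)
      + (∑ b'' ∈ Finset.univ.filter
        (fun b'' => ¬ dist b'' p.2 ≤ wernerD Ω (margG m) g / ε₂), ⟪g b'', m p⟫)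
      ≤ (ε₁ + ε₂) * ⟪ωM, m p⟫ := by
    by_contra hcon
    have hcon' : ∀ p : A × B, (ε₁ + ε₂) * ⟪ωM, m p⟫ <
        (∑ a'' ∈ Finset.univ.filter
          (fun a'' => ¬ dist a'' p.1 ≤ wernerD Ω (margF m) f / ε₁), ⟪f a'', m p⟫)
        + (∑ b'' ∈ Finset.univ.filter
          (fun b'' => ¬ dist b'' p.2 ≤ wernerD Ω (margG m) g / ε₂), ⟪g b'', m p⟫) :=
      fun p => not_le.mp fun hle => hcon ⟨p, hle⟩
    have hlt := Finset.sum_lt_sum_of_nonempty (Finset.univ_nonempty (α := A × B))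
      (fun p _ => hcon' p)
    rw [← Finset.mul_sum, hltot, mul_one, Finset.sum_add_distrib] at hlt
    linarith
  obtain ⟨p₀, hp₀⟩ := hex
  obtain ⟨l₀, ω₀, hl₀, hω₀Ω, hdec, hlval⟩ :=
    aux_effect_decomp hsd hωMunit (hm1 p₀).2 (hm1 p₀).1
  have houtF0 : 0 ≤ ∑ a'' ∈ Finset.univ.filter
      (fun a'' => ¬ dist a'' p₀.1 ≤ wernerD Ω (margF m) f / ε₁), ⟪f a'', m p₀⟫ :=
    Finset.sum_nonneg fun a'' _ => aux_posCone_inner_nonneg hsd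
      (aux_effect_mem_posCone hsd (hfeff a'')) (aux_effect_mem_posCone hsd (hm1 p₀).2)
  have houtG0 : 0 ≤ ∑ b'' ∈ Finset.univ.filter
      (fun b'' => ¬ dist b'' p₀.2 ≤ wernerD Ω (margG m) g / ε₂), ⟪g b'', m p₀⟫ :=
    Finset.sum_nonneg fun b'' _ => aux_posCone_inner_nonneg hsd
      (aux_effect_mem_posCone hsd (hgeff b'')) (aux_effect_mem_posCone hsd (hm1 p₀).2)
  have houtFle : ∑ a'' ∈ Finset.univ.filter
      (fun a'' => ¬ dist a'' p₀.1 ≤ wernerD Ω (margF m) f / ε₁), ⟪f a'', m p₀⟫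
      ≤ (ε₁ + ε₂) * l₀ := by
    rw [hlval] at hp₀
    linarith
  have houtGle : ∑ b'' ∈ Finset.univ.filter
      (fun b'' => ¬ dist b'' p₀.2 ≤ wernerD Ω (margG m) g / ε₂), ⟪g b'', m p₀⟫
      ≤ (ε₁ + ε₂) * l₀ := by
    rw [hlval] at hp₀
    linarith
  have hD₁0 : 0 ≤ wernerD Ω (margF m) f :=
    aux_wernerD_nonneg hωMΩ hωMunit hmF0 hmFsum hfeff hfsum
  have hD₂0 : 0 ≤ wernerD Ω (margG m) g :=
    aux_wernerD_nonneg hωMΩ hωMunit hmG0 hmGsum hgeff hgsum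
  -- localization of the state ω₀
  have hballF : ∀ w : ℝ, 2 * (wernerD Ω (margF m) f / ε₁) ≤ w →
      1 - (ε₁ + ε₂) ≤ ballSum f ω₀ p₀.1 w := by
    intro w hw
    have hterm : ∀ x : A, ⟪f x, ω₀⟫ = l₀⁻¹ * ⟪f x, m p₀⟫ := by
      intro x
      rw [hdec, real_inner_smul_right, ← mul_assoc, inv_mul_cancel₀ (ne_of_gt hl₀), one_mul]
    have hmono : ∑ x ∈ Finset.univ.filter
        (fun x => dist x p₀.1 ≤ wernerD Ω (margF m) f / ε₁), ⟪f x, ω₀⟫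
        ≤ ballSum f ω₀ p₀.1 w := by
      unfold ballSum
      refine Finset.sum_le_sum_of_subset_of_nonneg ?_
        (fun x _ _ => (hfeff x ω₀ hω₀Ω).1)
      intro x hx
      simp only [Finset.mem_filter, Finset.mem_univ, true_and] at *
      linarith
    refine le_trans ?_ hmono
    have hsplit := Finset.sum_filter_add_sum_filter_not Finset.univ
      (fun x => dist x p₀.1 ≤ wernerD Ω (margF m) f / ε₁) (fun x => ⟪f x, m p₀⟫)
    have htotal : ∑ x, ⟪f x, m p₀⟫ = l₀ := by
      rw [← sum_inner, hfsum, hlval]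
    have hfil : ∑ x ∈ Finset.univ.filter
        (fun x => dist x p₀.1 ≤ wernerD Ω (margF m) f / ε₁), ⟪f x, m p₀⟫
        = l₀ - ∑ x ∈ Finset.univ.filter
          (fun x => ¬ dist x p₀.1 ≤ wernerD Ω (margF m) f / ε₁), ⟪f x, m p₀⟫ := by
      rw [← htotal, ← hsplit]
      ring
    rw [Finset.sum_congr rfl fun x _ => hterm x, ← Finset.mul_sum, hfil]
    have hmul : l₀⁻¹ * (l₀ - (ε₁ + ε₂) * l₀)
        ≤ l₀⁻¹ * (l₀ - ∑ x ∈ Finset.univ.filter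
          (fun x => ¬ dist x p₀.1 ≤ wernerD Ω (margF m) f / ε₁), ⟪f x, m p₀⟫) :=
      mul_le_mul_of_nonneg_left (sub_le_sub_left houtFle _) (inv_nonneg.mpr hl₀.le)
    have hval : l₀⁻¹ * (l₀ - (ε₁ + ε₂) * l₀) = 1 - (ε₁ + ε₂) := by
      field_simp
    linarith
  have hballG : ∀ w : ℝ, 2 * (wernerD Ω (margG m) g / ε₂) ≤ w →
      1 - (ε₁ + ε₂) ≤ ballSum g ω₀ p₀.2 w := by
    intro w hw
    have hterm : ∀ y : B, ⟪g y, ω₀⟫ = l₀⁻¹ * ⟪g y, m p₀⟫ := by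
      intro y
      rw [hdec, real_inner_smul_right, ← mul_assoc, inv_mul_cancel₀ (ne_of_gt hl₀), one_mul]
    have hmono : ∑ y ∈ Finset.univ.filter
        (fun y => dist y p₀.2 ≤ wernerD Ω (margG m) g / ε₂), ⟪g y, ω₀⟫
        ≤ ballSum g ω₀ p₀.2 w := by
      unfold ballSum
      refine Finset.sum_le_sum_of_subset_of_nonneg ?_
        (fun y _ _ => (hgeff y ω₀ hω₀Ω).1)
      intro y hy
      simp only [Finset.mem_filter, Finset.mem_univ, true_and] at *
      linarith
    refine le_trans ?_ hmono
    have hsplit := Finset.sum_filter_add_sum_filter_not Finset.univ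
      (fun y => dist y p₀.2 ≤ wernerD Ω (margG m) g / ε₂) (fun y => ⟪g y, m p₀⟫)
    have htotal : ∑ y, ⟪g y, m p₀⟫ = l₀ := by
      rw [← sum_inner, hgsum, hlval]
    have hfil : ∑ y ∈ Finset.univ.filter
        (fun y => dist y p₀.2 ≤ wernerD Ω (margG m) g / ε₂), ⟪g y, m p₀⟫
        = l₀ - ∑ y ∈ Finset.univ.filter
          (fun y => ¬ dist y p₀.2 ≤ wernerD Ω (margG m) g / ε₂), ⟪g y, m p₀⟫ := by
      rw [← htotal, ← hsplit]
      ring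
    rw [Finset.sum_congr rfl fun y _ => hterm y, ← Finset.mul_sum, hfil]
    have hmul : l₀⁻¹ * (l₀ - (ε₁ + ε₂) * l₀)
        ≤ l₀⁻¹ * (l₀ - ∑ y ∈ Finset.univ.filter
          (fun y => ¬ dist y p₀.2 ≤ wernerD Ω (margG m) g / ε₂), ⟪g y, m p₀⟫) :=
      mul_le_mul_of_nonneg_left (sub_le_sub_left houtGle _) (inv_nonneg.mpr hl₀.le)
    have hval : l₀⁻¹ * (l₀ - (ε₁ + ε₂) * l₀) = 1 - (ε₁ + ε₂) := by
      field_simp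
    linarith
  exact ⟨ω₀, hω₀Ω, aux_width_le hε₁.1 hD₁0 hballF, aux_width_le hε₂.1 hD₂0 hballG⟩
end

section
/- Let n ≥ 4 be an even integer and let Ωₙ ⊆ ℝ³ be the regular polygon state space with pure states ωₙ(i). Let F := (eₙ(i), u − eₙ(i)) and G := (eₙ(j), u − eₙ(j)) be ideal measurements on Ωₙ (for some 0 ≤ i, j ≤ n−1), and let M̃ = (m_{kl})_{k,l∈{0,1}} be any approximate joint measurement of (F, G), with marginals M̃^F and M̃^G. Then there exists ω ∈ Ωₙ such that D_∞(M̃^F, F) + D_∞(M̃^G, G) ≥ LE(ω^F) + LE(ω^G). -/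
open RealInnerProductSpace

variable {V : Type*} [NormedAddCommGroup V] [InnerProductSpace ℝ V] [FiniteDimensional ℝ V]

/-- `rₙ = (cos (π/n))^{-1/2}`. -/
noncomputable def rpoly (n : ℕ) : ℝ := Real.sqrt (1 / Real.cos (Real.pi / n))

/-- The pure states `ωₙ(i)` of the regular polygon theory. -/
noncomputable def polyState (n : ℕ) (i : ℕ) : EuclideanSpace ℝ (Fin 3) :=
  (WithLp.equiv 2 (Fin 3 → ℝ)).symm
    ![rpoly n * Real.cos (2 * Real.pi * (i : ℝ) / n),
      rpoly n * Real.sin (2 * Real.pi * (i : ℝ) / n), 1]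

/-- The extreme effects `eₙ(i)` of the regular polygon theory, for even `n`. -/
noncomputable def polyEffect (n : ℕ) (i : ℕ) : EuclideanSpace ℝ (Fin 3) :=
  (WithLp.equiv 2 (Fin 3 → ℝ)).symm
    ![rpoly n * Real.cos ((2 * (i : ℝ) - 1) * Real.pi / n) / 2,
      rpoly n * Real.sin ((2 * (i : ℝ) - 1) * Real.pi / n) / 2, 1 / 2]

/-- The regular polygon state space `Ωₙ`. -/
noncomputable def polyΩ (n : ℕ) : Set (EuclideanSpace ℝ (Fin 3)) :=
  convexHull ℝ {ω | ∃ i < n, ω = polyState n i}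

/-- The unit effect `u = (0, 0, 1)`. -/
noncomputable def unitEff : EuclideanSpace ℝ (Fin 3) :=
  (WithLp.equiv 2 (Fin 3 → ℝ)).symm ![0, 0, 1]

/-!
Testing the marginal `M̃^F` on the vertex `ωᵢ`, where `F` is certain, and on its antipode
`2u - ωᵢ` (a state since `n` is even), where `F` is impossible, gives
`D_∞(M̃^F, F) ≥ 1/2 - ⟪M̃^F₀, ωᵢ - u⟫`, and likewise for `G`. Write `ωᵢ - u = y + z` and
`ω_j - u = y - z` with `y = (ωᵢ + ω_j)/2 - u = c (w - u)` and `z = (ωᵢ - ω_j)/2 = d (w' - u)`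
for states `w`, `w'`. By central symmetry every effect `e` satisfies
`|⟪e, w - u⟫| ≤ ⟪e, u⟫`, and since `y ⊥ u = ∑ m`, the two pairings add up to at most
`max |c| |d|`. Finally `y` and `z` point to a vertex or an edge midpoint of the polygon, and
`cos (x - y) + cos (x + y) = 2 cos x cos y` shows that at a suitable vertex `ω_t` the
localization errors add up to at most `1 - |c|` (resp. `1 - |d|`).
-/

open Real

section SymmetricStateSpace

variable {E : Type*} [NormedAddCommGroup E] [InnerProductSpace ℝ E]

lemma bddAbove_dInfty_set {Ω : Set E} (hΩ : Bornology.IsBounded Ω) {A : Type*} [Finite A]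
    (ft f : A → E) : BddAbove {d : ℝ | ∃ ω ∈ Ω, ∃ a : A, d = |⟪ft a, ω⟫ - ⟪f a, ω⟫|} := by
  obtain ⟨R, hR⟩ := isBounded_iff_forall_norm_le.mp hΩ
  obtain ⟨C, hC⟩ := (Set.finite_range fun a => ‖ft a - f a‖).bddAbove
  refine ⟨C * R, ?_⟩
  rintro _ ⟨ω, hω, a, rfl⟩
  have hCa : ‖ft a - f a‖ ≤ C := hC ⟨a, rfl⟩
  rw [← inner_sub_left]
  calc |⟪ft a - f a, ω⟫| ≤ ‖ft a - f a‖ * ‖ω‖ := abs_real_inner_le_norm _ _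
    _ ≤ C * R := mul_le_mul hCa (hR ω hω) (norm_nonneg _) ((norm_nonneg _).trans hCa)

lemma abs_inner_sub_le_dInfty {Ω : Set E} (hΩ : Bornology.IsBounded Ω) {A : Type*} [Finite A]
    (ft f : A → E) {ω : E} (hω : ω ∈ Ω) (a : A) :
    |⟪ft a, ω⟫ - ⟪f a, ω⟫| ≤ dInfty Ω ft f :=
  le_csSup (bddAbove_dInfty_set hΩ ft f) ⟨ω, hω, a, rfl⟩

/-- `f a` is certain on `ω` and impossible on the antipodal state `2u - ω`; the errors of `ft a`
on these two states average to the bound. -/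
lemma half_sub_inner_le_dInfty {Ω : Set E} (hΩ : Bornology.IsBounded Ω) {u ω : E}
    (hω : ω ∈ Ω) (hω' : (2 : ℝ) • u - ω ∈ Ω) {A : Type*} [Finite A] (ft f : A → E) (a : A)
    (hfω : ⟪f a, ω⟫ = 1) (hfu : ⟪f a, u⟫ = 1 / 2) :
    1 / 2 - ⟪ft a, ω - u⟫ ≤ dInfty Ω ft f := by
  have h₁ := abs_inner_sub_le_dInfty hΩ ft f hω a
  have h₂ := abs_inner_sub_le_dInfty hΩ ft f hω' a
  simp only [inner_sub_right, real_inner_smul_right, hfω, hfu] at h₁ h₂ ⊢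
  linarith [neg_abs_le (⟪ft a, ω⟫ - 1), le_abs_self (2 * ⟪ft a, u⟫ - ⟪ft a, ω⟫ - (2 * (1 / 2) - 1))]

lemma abs_inner_smul_sub_le {Ω : Set E} {u m w : E} (hsymm : ∀ ω ∈ Ω, (2 : ℝ) • u - ω ∈ Ω)
    (hm : ∀ ω ∈ Ω, 0 ≤ ⟪m, ω⟫) (hw : w ∈ Ω) {c K : ℝ} (hc : |c| ≤ K) :
    |⟪m, c • (w - u)⟫| ≤ K * ⟪m, u⟫ := by
  have h₁ := hm w hw
  have h₂ := hm _ (hsymm w hw)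
  rw [inner_sub_right, real_inner_smul_right] at h₂
  have hwu : |⟪m, w - u⟫| ≤ ⟪m, u⟫ := by
    rw [inner_sub_right, abs_le]; constructor <;> linarith
  rw [real_inner_smul_right, abs_mul]
  exact mul_le_mul hc hwu (abs_nonneg _) ((abs_nonneg _).trans hc)

/-- Writing `ω₁ - u = y + z` and `ω₂ - u = y - z`, the pairing of the two marginals collapses to
`⟪m₀₀ - m₁₁, y⟫ + ⟪m₀₁ - m₁₀, z⟫`, because `y` is orthogonal to `u = ∑ m`. -/
lemma inner_margF_add_inner_margG_le {Ω : Set E} {u : E} (hu : ∀ ω ∈ Ω, ⟪u, ω⟫ = 1)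
    (hsymm : ∀ ω ∈ Ω, (2 : ℝ) • u - ω ∈ Ω) {m : Fin 2 × Fin 2 → E}
    (hm : ∀ p, ∀ ω ∈ Ω, 0 ≤ ⟪m p, ω⟫) (hsum : ∑ p, m p = u) {w w' : E} (hw : w ∈ Ω)
    (hw' : w' ∈ Ω) (c d : ℝ) :
    ⟪margF m 0, c • (w - u) + d • (w' - u)⟫ + ⟪margG m 0, c • (w - u) - d • (w' - u)⟫ ≤
      max |c| |d| := by
  set y := c • (w - u)
  set z := d • (w' - u)
  have huu : ⟪u, u⟫ = 1 := by
    have h := hu _ (hsymm w hw)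
    rw [inner_sub_right, real_inner_smul_right, hu w hw] at h
    linarith
  have hsum_u : ∑ p, ⟪m p, u⟫ = 1 := by rw [← sum_inner, hsum, huu]
  have hsum_y : ∑ p, ⟪m p, y⟫ = 0 := by
    rw [← sum_inner, hsum, real_inner_smul_right, inner_sub_right, hu w hw, huu, sub_self, mul_zero]
  have hy : ∀ p, |⟪m p, y⟫| ≤ max |c| |d| * ⟪m p, u⟫ := fun p =>
    abs_inner_smul_sub_le hsymm (hm p) hw (le_max_left _ _)
  have hz : ∀ p, |⟪m p, z⟫| ≤ max |c| |d| * ⟪m p, u⟫ := fun p =>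
    abs_inner_smul_sub_le hsymm (hm p) hw' (le_max_right _ _)
  simp only [Fintype.sum_prod_type, Fin.sum_univ_two] at hsum_u hsum_y
  simp only [margF, margG, Fin.sum_univ_two, inner_add_left, inner_add_right, inner_sub_right]
  have hK : max |c| |d| * ⟪m (0, 0), u⟫ + max |c| |d| * ⟪m (0, 1), u⟫ +
      (max |c| |d| * ⟪m (1, 0), u⟫ + max |c| |d| * ⟪m (1, 1), u⟫) = max |c| |d| := by
    linear_combination max |c| |d| * hsum_u
  linarith [(abs_le.mp (hy (0, 0))).2, (abs_le.mp (hy (1, 1))).1, (abs_le.mp (hz (0, 1))).2,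
    (abs_le.mp (hz (1, 0))).1]

lemma one_sub_max_le_dInfty_add {Ω : Set E} (hΩ : Bornology.IsBounded Ω) {u : E}
    (hu : ∀ ω ∈ Ω, ⟪u, ω⟫ = 1) (hsymm : ∀ ω ∈ Ω, (2 : ℝ) • u - ω ∈ Ω)
    {m : Fin 2 × Fin 2 → E} (hm : ∀ p, ∀ ω ∈ Ω, 0 ≤ ⟪m p, ω⟫) (hsum : ∑ p, m p = u)
    {F G : Fin 2 → E} {ω₁ ω₂ : E} (hω₁ : ω₁ ∈ Ω) (hω₂ : ω₂ ∈ Ω)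
    (hFω : ⟪F 0, ω₁⟫ = 1) (hFu : ⟪F 0, u⟫ = 1 / 2) (hGω : ⟪G 0, ω₂⟫ = 1)
    (hGu : ⟪G 0, u⟫ = 1 / 2) {c d : ℝ} {w w' : E} (hw : w ∈ Ω) (hw' : w' ∈ Ω)
    (hc : (2 : ℝ)⁻¹ • (ω₁ + ω₂) - u = c • (w - u)) (hd : (2 : ℝ)⁻¹ • (ω₁ - ω₂) = d • (w' - u)) :
    1 - max |c| |d| ≤ dInfty Ω (margF m) F + dInfty Ω (margG m) G := by
  have hF := half_sub_inner_le_dInfty hΩ hω₁ (hsymm _ hω₁) (margF m) F 0 hFω hFu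
  have hG := half_sub_inner_le_dInfty hΩ hω₂ (hsymm _ hω₂) (margG m) G 0 hGω hGu
  have key := inner_margF_add_inner_margG_le hu hsymm hm hsum hw hw' c d
  rw [← hc, ← hd, show (2 : ℝ)⁻¹ • (ω₁ + ω₂) - u + (2 : ℝ)⁻¹ • (ω₁ - ω₂) = ω₁ - u by module,
    show (2 : ℝ)⁻¹ • (ω₁ + ω₂) - u - (2 : ℝ)⁻¹ • (ω₁ - ω₂) = ω₂ - u by module] at key
  linarith

lemma locError_pair {u f ω : E} (hu : ⟪u, ω⟫ = 1) :
    locError ![f, u - f] ω = 1 / 2 - |⟪f, ω⟫ - 1 / 2| := by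
  have hsup : Finset.univ.sup' Finset.univ_nonempty (fun a => ⟪![f, u - f] a, ω⟫) =
      max ⟪f, ω⟫ (1 - ⟪f, ω⟫) := by
    rw [← hu, ← inner_sub_left]
    exact le_antisymm (Finset.sup'_le _ _ fun a _ => by fin_cases a <;> simp)
      (max_le (Finset.le_sup' (fun a => ⟪![f, u - f] a, ω⟫) (Finset.mem_univ 0))
        (Finset.le_sup' (fun a => ⟪![f, u - f] a, ω⟫) (Finset.mem_univ 1)))
  rw [locError, hsup]
  rcases le_total ⟪f, ω⟫ (1 / 2) with h | h
  · rw [max_eq_right (by linarith), abs_of_nonpos (by linarith)]; ring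
  · rw [max_eq_left (by linarith), abs_of_nonneg (by linarith)]; ring

end SymmetricStateSpace

section Polygon

noncomputable def vec3 (a b c : ℝ) : EuclideanSpace ℝ (Fin 3) :=
  (WithLp.equiv 2 (Fin 3 → ℝ)).symm ![a, b, c]

lemma inner_vec3 (a b c a' b' c' : ℝ) :
    ⟪vec3 a b c, vec3 a' b' c'⟫ = a * a' + b * b' + c * c' := by
  simp only [vec3, WithLp.equiv_symm_apply, PiLp.inner_apply, RCLike.inner_apply, ringHom_apply,
    Fin.sum_univ_three, Matrix.cons_val_zero, Matrix.cons_val_one, Matrix.cons_val]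
  ring

lemma vec3_add (a b c a' b' c' : ℝ) :
    vec3 a b c + vec3 a' b' c' = vec3 (a + a') (b + b') (c + c') := by
  ext k; fin_cases k <;> simp [vec3]

lemma vec3_sub (a b c a' b' c' : ℝ) :
    vec3 a b c - vec3 a' b' c' = vec3 (a - a') (b - b') (c - c') := by
  ext k; fin_cases k <;> simp [vec3]

lemma smul_vec3 (r a b c : ℝ) : r • vec3 a b c = vec3 (r * a) (r * b) (r * c) := by
  ext k; fin_cases k <;> simp [vec3]

lemma unitEff_eq_vec3 : unitEff = vec3 0 0 1 := rfl

/-- The circle of radius `rₙ` at height `1` through the pure states: `polyState n i` is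
`polyPoint n i`, and non-integral parameters give points on the circle between them. -/
noncomputable def polyPoint (n : ℕ) (t : ℝ) : EuclideanSpace ℝ (Fin 3) :=
  vec3 (rpoly n * cos (2 * π * t / n)) (rpoly n * sin (2 * π * t / n)) 1

variable {n : ℕ}

lemma polyPoint_natCast_mem (hn : 0 < n) (k : ℕ) : polyPoint n k ∈ polyΩ n := by
  have hk : (k : ℝ) = (k % n : ℕ) + n * (k / n : ℕ) := by exact_mod_cast (Nat.mod_add_div k n).symm
  have harg : 2 * π * k / n = 2 * π * (k % n : ℕ) / n + (k / n : ℕ) * (2 * π) := by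
    rw [hk]; field_simp
  refine subset_convexHull ℝ _ ⟨k % n, Nat.mod_lt k hn, ?_⟩
  rw [polyPoint, harg, cos_add_nat_mul_two_pi, sin_add_nat_mul_two_pi]
  rfl

lemma inner_unitEff_polyPoint (t : ℝ) : ⟪unitEff, polyPoint n t⟫ = 1 := by
  rw [unitEff_eq_vec3, polyPoint, inner_vec3]; ring

lemma inner_unitEff_of_mem {ω : EuclideanSpace ℝ (Fin 3)} (hω : ω ∈ polyΩ n) :
    ⟪unitEff, ω⟫ = 1 := by
  refine convexHull_min ?_ (convex_hyperplane (innerₛₗ ℝ unitEff).isLinear 1) hω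
  rintro _ ⟨i, -, rfl⟩
  exact inner_unitEff_polyPoint i

lemma polyPoint_add_half (hn : n ≠ 0) (t : ℝ) :
    polyPoint n (t + n / 2) = (2 : ℝ) • unitEff - polyPoint n t := by
  have harg : 2 * π * (t + n / 2) / n = 2 * π * t / n + π := by field_simp
  rw [polyPoint, polyPoint, harg, cos_add_pi, sin_add_pi, unitEff_eq_vec3, smul_vec3, vec3_sub]
  congr 1 <;> ring

lemma natCast_add_half (heven : Even n) (k : ℕ) : ((k + n / 2 : ℕ) : ℝ) = k + n / 2 := by
  push_cast [Nat.cast_div_charZero (even_iff_two_dvd.mp heven)]; ring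

lemma two_smul_unitEff_sub_mem (hn : 0 < n) (heven : Even n) {ω : EuclideanSpace ℝ (Fin 3)}
    (hω : ω ∈ polyΩ n) : (2 : ℝ) • unitEff - ω ∈ polyΩ n := by
  let φ : EuclideanSpace ℝ (Fin 3) →ᵃ[ℝ] EuclideanSpace ℝ (Fin 3) :=
    AffineMap.const ℝ _ ((2 : ℝ) • unitEff) - AffineMap.id ℝ _
  have hφ : φ '' polyΩ n ⊆ polyΩ n := by
    rw [polyΩ, AffineMap.image_convexHull]
    refine convexHull_min ?_ (convex_convexHull ℝ _)
    rintro _ ⟨_, ⟨i, -, rfl⟩, rfl⟩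
    have := polyPoint_natCast_mem hn (i + n / 2)
    rwa [natCast_add_half heven, polyPoint_add_half hn.ne'] at this
  exact hφ ⟨ω, hω, rfl⟩

lemma isBounded_polyΩ : Bornology.IsBounded (polyΩ n) := by
  have hfin : {ω | ∃ i < n, ω = polyState n i}.Finite :=
    ((Set.finite_Iio n).image (polyState n)).subset fun _ ⟨i, hi, hω⟩ => ⟨i, hi, hω.symm⟩
  exact (hfin.isCompact_convexHull ℝ).isBounded

lemma half_add_polyPoint_sub_unitEff (s t : ℝ) :
    (2 : ℝ)⁻¹ • (polyPoint n s + polyPoint n t) - unitEff =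
      cos ((t - s) * (π / n)) • (polyPoint n ((s + t) / 2) - unitEff) := by
  have hmid : (2 * π * s / n + 2 * π * t / n) / 2 = 2 * π * ((s + t) / 2) / n := by ring
  have hhalf : (2 * π * s / n - 2 * π * t / n) / 2 = -((t - s) * (π / n)) := by ring
  have hc := cos_add_cos (2 * π * s / n) (2 * π * t / n)
  have hs := sin_add_sin (2 * π * s / n) (2 * π * t / n)
  rw [hmid, hhalf, cos_neg] at hc hs
  simp only [polyPoint, unitEff_eq_vec3, vec3_add, vec3_sub, smul_vec3]
  congr 1
  · linear_combination rpoly n / 2 * hc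
  · linear_combination rpoly n / 2 * hs
  · ring

lemma cos_pi_div_pos (hn : 2 < n) : 0 < cos (π / n) := by
  have hn' : (2 : ℝ) < n := by exact_mod_cast hn
  apply cos_pos_of_mem_Ioo
  constructor
  · linarith [div_pos pi_pos (by linarith : (0 : ℝ) < n), pi_pos]
  · rw [div_lt_div_iff₀ (by linarith) two_pos]
    nlinarith [pi_pos]

lemma rpoly_sq (hn : 2 < n) : rpoly n ^ 2 = (cos (π / n))⁻¹ := by
  rw [rpoly, sq_sqrt (by positivity [cos_pi_div_pos hn]), one_div]

lemma inner_polyEffect_polyPoint (hn : 2 < n) (i : ℕ) (t : ℝ) :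
    ⟪polyEffect n i, polyPoint n t⟫ =
      1 / 2 + cos ((2 * (i - t) - 1) * (π / n)) / (2 * cos (π / n)) := by
  have hcos : cos ((2 * i - 1) * π / n) * cos (2 * π * t / n) +
      sin ((2 * i - 1) * π / n) * sin (2 * π * t / n) = cos ((2 * (i - t) - 1) * (π / n)) := by
    rw [← cos_sub]; ring_nf
  have hr := rpoly_sq hn
  have hc := (cos_pi_div_pos hn).ne'
  rw [show polyEffect n i = vec3 _ _ _ from rfl, polyPoint, inner_vec3, ← hcos]
  field_simp
  rw [hr]
  field_simp
  ring

lemma inner_polyEffect_unitEff (i : ℕ) : ⟪polyEffect n i, unitEff⟫ = 1 / 2 := by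
  rw [show polyEffect n i = vec3 _ _ _ from rfl, unitEff_eq_vec3, inner_vec3]; ring

lemma inner_polyEffect_polyPoint_self (hn : 2 < n) (i : ℕ) :
    ⟪polyEffect n i, polyPoint n i⟫ = 1 := by
  rw [inner_polyEffect_polyPoint hn, sub_self, mul_zero, zero_sub, neg_one_mul, cos_neg]
  field_simp [(cos_pi_div_pos hn).ne']
  ring

lemma locError_polyEffect (hn : 2 < n) (i : ℕ) (t : ℝ) :
    locError ![polyEffect n i, unitEff - polyEffect n i] (polyPoint n t) =
      1 / 2 - |cos ((2 * (i - t) - 1) * (π / n))| / (2 * cos (π / n)) := by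
  rw [locError_pair (inner_unitEff_polyPoint t), inner_polyEffect_polyPoint hn, add_sub_cancel_left,
    abs_div, abs_of_pos (mul_pos two_pos (cos_pi_div_pos hn))]

lemma locError_add_locError_le (hn : 2 < n) {i j : ℕ} {t : ℝ} {K : ℝ}
    (hK : 2 * cos (π / n) * K ≤
      |cos ((2 * (i - t) - 1) * (π / n))| + |cos ((2 * (j - t) - 1) * (π / n))|) :
    locError ![polyEffect n i, unitEff - polyEffect n i] (polyPoint n t) +
      locError ![polyEffect n j, unitEff - polyEffect n j] (polyPoint n t) ≤ 1 - K := by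
  have hc := cos_pi_div_pos hn
  have hK' : K ≤ |cos ((2 * (i - t) - 1) * (π / n))| / (2 * cos (π / n)) +
      |cos ((2 * (j - t) - 1) * (π / n))| / (2 * cos (π / n)) := by
    rw [← add_div, le_div_iff₀' (by positivity)]; exact hK
  rw [locError_polyEffect hn, locError_polyEffect hn]
  linarith

lemma two_mul_abs_cos_mul_cos_le (x y : ℝ) :
    2 * |cos x * cos y| ≤ |cos (x - y)| + |cos (x + y)| := by
  calc 2 * |cos x * cos y| = |cos (x - y) + cos (x + y)| := by
        rw [cos_sub, cos_add, ← abs_two, ← abs_mul]; ring_nf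
    _ ≤ |cos (x - y)| + |cos (x + y)| := abs_add_le _ _

/-- With `t = ⌊(p + q)/2⌋`, the chord midpoint of `ωₚ, ω_q` lies on the ray from `u` through
the vertex `ω_t` if `p + q` is even, and through the midpoint of the edge `[ω_t, ω_{t+1}]` if
it is odd. -/
lemma exists_half_add_polyPoint_eq (hn : 2 < n) (p q : ℕ) :
    ∃ t : ℕ, ∃ c : ℝ, ∃ w ∈ polyΩ n,
      (2 : ℝ)⁻¹ • (polyPoint n p + polyPoint n q) - unitEff = c • (w - unitEff) ∧
      2 * cos (π / n) * |c| ≤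
        |cos ((2 * (p - t) - 1) * (π / n))| + |cos ((2 * (q - t) - 1) * (π / n))| := by
  have hn0 : 0 < n := by omega
  have hc := cos_pi_div_pos hn
  have hmid := half_add_polyPoint_sub_unitEff (n := n) p q
  obtain ⟨t, ht | ht⟩ := Nat.even_or_odd' (p + q)
  · have htR : ((p : ℝ) + q) / 2 = t := by
      rw [div_eq_iff two_ne_zero, mul_comm]; exact_mod_cast ht
    refine ⟨t, cos ((q - p) * (π / n)), polyPoint n t, polyPoint_natCast_mem hn0 t,
      by rw [hmid, htR], ?_⟩
    have := two_mul_abs_cos_mul_cos_le ((q - p) * (π / n)) (π / n)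
    rw [abs_mul (cos _), abs_of_pos hc] at this
    rw [show (2 * (p - t) - 1) * (π / n) = -((q - p) * (π / n) + π / n) by rw [← htR]; ring,
      show (2 * (q - t) - 1) * (π / n) = (q - p) * (π / n) - π / n by rw [← htR]; ring, cos_neg]
    linarith
  · have hpq : (p : ℝ) + q = 2 * t + 1 := by exact_mod_cast ht
    have htR : ((p : ℝ) + q) / 2 = t + 1 / 2 := by linarith
    have hw : (2 : ℝ)⁻¹ • (polyPoint n t + polyPoint n (t + 1)) - unitEff =
        cos (π / n) • (polyPoint n (t + 1 / 2) - unitEff) := by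
      rw [half_add_polyPoint_sub_unitEff]; ring_nf
    have hmem : (2 : ℝ)⁻¹ • (polyPoint n t + polyPoint n (t + 1)) ∈ polyΩ n := by
      have h := (convex_convexHull ℝ _) (polyPoint_natCast_mem hn0 t)
        (polyPoint_natCast_mem hn0 (t + 1)) (by norm_num : (0 : ℝ) ≤ 2⁻¹)
        (by norm_num : (0 : ℝ) ≤ 2⁻¹) (by norm_num)
      rwa [Nat.cast_succ, ← smul_add] at h
    refine ⟨t, cos ((q - p) * (π / n)) / cos (π / n), _, hmem,
      by rw [hmid, htR, hw, smul_smul, div_mul_cancel₀ _ hc.ne'], ?_⟩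
    rw [show (2 * (p - t) - 1) * (π / n) = -((q - p) * (π / n)) by linear_combination (π / n) * hpq,
      show (2 * (q - t) - 1) * (π / n) = (q - p) * (π / n) by linear_combination (π / n) * hpq,
      cos_neg, abs_div, abs_of_pos hc]
    exact le_of_eq (by field_simp; ring)

lemma exists_half_sub_polyPoint_eq (hn : 2 < n) (heven : Even n) (p q : ℕ) :
    ∃ t : ℕ, ∃ c : ℝ, ∃ w ∈ polyΩ n,
      (2 : ℝ)⁻¹ • (polyPoint n p - polyPoint n q) = c • (w - unitEff) ∧
      2 * cos (π / n) * |c| ≤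
        |cos ((2 * (p - t) - 1) * (π / n))| + |cos ((2 * (q - t) - 1) * (π / n))| := by
  -- `ωₚ - ω_q = ωₚ + ω_{q + n/2} - 2u`
  obtain ⟨t, c, w, hw, heq, hc⟩ := exists_half_add_polyPoint_eq hn p (q + n / 2)
  have hn0 : (n : ℝ) ≠ 0 := by positivity
  rw [natCast_add_half heven, polyPoint_add_half (by omega),
    show (2 * (q + n / 2 - t) - 1) * (π / n) = (2 * (q - t) - 1) * (π / n) + π by
      field_simp; ring, cos_add_pi, abs_neg] at *
  refine ⟨t, c, w, hw, ?_, hc⟩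
  rw [← heq]
  module

end Polygon

theorem polygon_preparation_implies_measurement_lInfty_general
    (n : ℕ) (hn : 4 ≤ n) (heven : Even n) (i j : ℕ)
    (F G : Fin 2 → EuclideanSpace ℝ (Fin 3))
    (hF : F = ![polyEffect n i, unitEff - polyEffect n i])
    (hG : G = ![polyEffect n j, unitEff - polyEffect n j])
    {m : Fin 2 × Fin 2 → EuclideanSpace ℝ (Fin 3)}
    (hM : IsMeasurement (polyΩ n) unitEff m) :
    ∃ ω ∈ polyΩ n,
      locError F ω + locError G ω ≤
        dInfty (polyΩ n) (margF m) F + dInfty (polyΩ n) (margG m) G := by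
  have hn2 : 2 < n := by omega
  have hn0 : 0 < n := by omega
  subst hF hG
  obtain ⟨s, c, w, hw, hsum, hc⟩ := exists_half_add_polyPoint_eq hn2 i j
  obtain ⟨t, d, w', hw', hdiff, hd⟩ := exists_half_sub_polyPoint_eq hn2 heven i j
  have hdist := one_sub_max_le_dInfty_add (F := ![polyEffect n i, unitEff - polyEffect n i])
    (G := ![polyEffect n j, unitEff - polyEffect n j]) isBounded_polyΩ
    (fun _ => inner_unitEff_of_mem) (fun _ => two_smul_unitEff_sub_mem hn0 heven)
    (fun p _ hω => ((hM.1 p).2 _ hω).1) hM.2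
    (polyPoint_natCast_mem hn0 i) (polyPoint_natCast_mem hn0 j)
    (inner_polyEffect_polyPoint_self hn2 i) (inner_polyEffect_unitEff i)
    (inner_polyEffect_polyPoint_self hn2 j) (inner_polyEffect_unitEff j) hw hw' hsum hdiff
  rcases le_total |d| |c| with h | h
  · rw [max_eq_left h] at hdist
    exact ⟨_, polyPoint_natCast_mem hn0 s, (locError_add_locError_le hn2 hc).trans hdist⟩
  · rw [max_eq_right h] at hdist
    exact ⟨_, polyPoint_natCast_mem hn0 t, (locError_add_locError_le hn2 hd).trans hdist⟩

/-- **Theorem 3 (paper).** In an even-sided regular polygon theory, the sum of the `l∞`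
distances of the marginals of an approximate joint measurement from two ideal
measurements is bounded below by the sum of the localization errors on some state. -/
theorem polygon_preparation_implies_measurement_lInfty
    (n : ℕ) (hn : 4 ≤ n) (heven : Even n) (i j : ℕ) (hi : i < n) (hj : j < n)
    (F G : Fin 2 → EuclideanSpace ℝ (Fin 3))
    (hF : F = ![polyEffect n i, unitEff - polyEffect n i])
    (hG : G = ![polyEffect n j, unitEff - polyEffect n j])
    {m : Fin 2 × Fin 2 → EuclideanSpace ℝ (Fin 3)}
    (hM : IsMeasurement (polyΩ n) unitEff m) :
    ∃ ω ∈ polyΩ n,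
      locError F ω + locError G ω ≤
        dInfty (polyΩ n) (margF m) F + dInfty (polyΩ n) (margG m) G :=
  polygon_preparation_implies_measurement_lInfty_general n hn heven i j F G hF hG hM
end

section
/- Let Ω ⊆ V be a state space, (A, d_A) a finite metric space, F = (f_a)_{a∈A} a measurement each of whose effects attains the value 1 on some state (i.e., for every a ∈ A there exists ω ∈ Ω with ⟪f_a, ω⟫ = 1, as holds for ideal measurements), and F̃ = (f̃_a)_{a∈A} an arbitrary measurement. Then for every ε ∈ (0, 1], the error bar width and Werner's measure satisfy 𝒲_ε(F̃, F) ≤ (2/ε) · D_W(F̃, F). -/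
open RealInnerProductSpace

variable {V : Type*} [NormedAddCommGroup V] [InnerProductSpace ℝ V] [FiniteDimensional ℝ V]

/-- **Proposition 3 (paper).** The error bar width is bounded by `2/ε` times Werner's
measure, for measurements whose ideal effects attain the value `1` on some state. -/
theorem errorBarWidth_le_werner
    {V : Type*} [NormedAddCommGroup V] [InnerProductSpace ℝ V] [FiniteDimensional ℝ V]
    {Ω : Set V} (hΩ : IsStateSpace Ω)
    {ωM : V} (hωMΩ : ωM ∈ Ω) (hωMunit : ∀ ω ∈ Ω, ⟪ωM, ω⟫ = 1)
    {A : Type*} [Fintype A] [MetricSpace A]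
    {f : A → V} (hFmeas : IsMeasurement Ω ωM f)
    (hFattain : ∀ a : A, ∃ ω ∈ Ω, ⟪f a, ω⟫ = 1)
    {ft : A → V} (hFt : IsMeasurement Ω ωM ft)
    {ε : ℝ} (hε : ε ∈ Set.Ioc (0 : ℝ) 1) :
    errorBarWidth Ω ft f ε ≤ (2 / ε) * wernerD Ω ft f := by
  classical
  obtain ⟨hεpos, hε1⟩ := hε
  obtain ⟨ω₀, hω₀⟩ := hΩ.1
  -- abbreviations
  set Sw : Set ℝ := {d : ℝ | ∃ ω ∈ Ω, ∃ h : A → ℝ,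
      (∀ a₁ a₂ : A, |h a₁ - h a₂| ≤ dist a₁ a₂) ∧
      d = |∑ a, h a * (⟪ft a, ω⟫ - ⟪f a, ω⟫)|} with hSw
  have habs1 : ∀ (x : A) (ω : V), ω ∈ Ω → |⟪ft x, ω⟫ - ⟪f x, ω⟫| ≤ 1 := by
    intro x ω hω
    have h1 := (hFt.1 x).2 ω hω
    have h2 := (hFmeas.1 x).2 ω hω
    rw [abs_le]; constructor <;> linarith [h1.1, h1.2, h2.1, h2.2]
  have hsumft : ∀ ω ∈ Ω, ∑ x, ⟪ft x, ω⟫ = (1 : ℝ) := by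
    intro ω hω
    rw [← sum_inner, hFt.2, hωMunit ω hω]
  have hsumf : ∀ ω ∈ Ω, ∑ x, ⟪f x, ω⟫ = (1 : ℝ) := by
    intro ω hω
    rw [← sum_inner, hFmeas.2, hωMunit ω hω]
  -- boundedness of the Werner set
  have hbdd : BddAbove Sw := by
    by_cases hA : Nonempty A
    · obtain ⟨a₀⟩ := hA
      refine ⟨∑ a, dist a a₀, ?_⟩
      rintro d ⟨ω, hω, h, hLip, rfl⟩
      have hzero : ∑ x, (⟪ft x, ω⟫ - ⟪f x, ω⟫) = 0 := by
        rw [Finset.sum_sub_distrib, hsumft ω hω, hsumf ω hω]; ring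
      have hrw : ∑ x, h x * (⟪ft x, ω⟫ - ⟪f x, ω⟫)
          = ∑ x, (h x - h a₀) * (⟪ft x, ω⟫ - ⟪f x, ω⟫) := by
        have : ∑ x, (h x - h a₀) * (⟪ft x, ω⟫ - ⟪f x, ω⟫)
            = ∑ x, h x * (⟪ft x, ω⟫ - ⟪f x, ω⟫)
              - h a₀ * ∑ x, (⟪ft x, ω⟫ - ⟪f x, ω⟫) := by
          rw [Finset.mul_sum, ← Finset.sum_sub_distrib]
          exact Finset.sum_congr rfl fun x _ => by ring
        rw [this, hzero]; ring
      rw [hrw]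
      calc |∑ x, (h x - h a₀) * (⟪ft x, ω⟫ - ⟪f x, ω⟫)|
          ≤ ∑ x, |(h x - h a₀) * (⟪ft x, ω⟫ - ⟪f x, ω⟫)| :=
            Finset.abs_sum_le_sum_abs _ _
        _ ≤ ∑ x, dist x a₀ := by
            refine Finset.sum_le_sum fun x _ => ?_
            rw [abs_mul]
            calc |h x - h a₀| * |⟪ft x, ω⟫ - ⟪f x, ω⟫|
                ≤ dist x a₀ * 1 :=
                  mul_le_mul (hLip x a₀) (habs1 x ω hω) (abs_nonneg _)
                    dist_nonneg
              _ = dist x a₀ := mul_one _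
    · refine ⟨0, ?_⟩
      rintro d ⟨ω, hω, h, hLip, rfl⟩
      have : IsEmpty A := not_nonempty_iff.mp hA
      simp
  have hD : wernerD Ω ft f = sSup Sw := rfl
  have hD0 : (0 : ℝ) ≤ wernerD Ω ft f := by
    rw [hD]
    refine le_csSup hbdd ⟨ω₀, hω₀, 0, fun a₁ a₂ => by simp [dist_nonneg], by simp⟩
  set D := wernerD Ω ft f with hDdef
  clear_value D
  -- min lemma
  have hminlip : ∀ p q k : ℝ, |min p k - min q k| ≤ |p - q| := by
    intro p q k
    have h := abs_abs_sub_abs_le_abs_sub (p - k) (q - k)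
    have he : p - k - (q - k) = p - q := by ring
    rw [he] at h
    obtain ⟨hl, hr⟩ := abs_le.mp h
    have hmp : min p k = (p + k - |p - k|) / 2 := by
      rcases le_total p k with hpk | hpk
      · rw [min_eq_left hpk, abs_of_nonpos (by linarith)]; ring
      · rw [min_eq_right hpk, abs_of_nonneg (by linarith)]; ring
    have hmq : min q k = (q + k - |q - k|) / 2 := by
      rcases le_total q k with hpk | hpk
      · rw [min_eq_left hpk, abs_of_nonpos (by linarith)]; ring
      · rw [min_eq_right hpk, abs_of_nonneg (by linarith)]; ring
    rw [hmp, hmq, abs_le]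
    constructor <;> linarith [le_abs_self (p - q), neg_abs_le (p - q)]
  -- main argument
  refine le_of_forall_pos_le_add fun δ hδ => ?_
  have hDε : (0 : ℝ) ≤ 2 / ε * D := by
    apply mul_nonneg _ hD0
    positivity
  set w : ℝ := 2 / ε * D + δ with hwdef
  have hw : 0 < w := by rw [hwdef]; exact add_pos_of_nonneg_of_pos hDε hδ
  clear_value w
  refine csInf_le ⟨0, fun v hv => le_of_lt hv.1⟩ ?_
  refine ⟨hw, fun a ω hω hfa => ?_⟩
  set g : A → ℝ := fun x => min (dist x a) (w / 2) with hg
  have hgLip : ∀ x y : A, |g x - g y| ≤ dist x y :=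
    fun x y => le_trans (hminlip _ _ _) (abs_dist_sub_le x y a)
  have hga : g a = 0 := by
    simp only [hg, dist_self]
    exact min_eq_left (by linarith)
  have hgnn : ∀ x, 0 ≤ g x := fun x => le_min dist_nonneg (by linarith)
  -- other f-probabilities vanish
  have hqz : ∀ x, x ≠ a → ⟪f x, ω⟫ = 0 := by
    have hnn : ∀ x ∈ Finset.univ.erase a, (0 : ℝ) ≤ ⟪f x, ω⟫ :=
      fun x _ => ((hFmeas.1 x).2 ω hω).1
    have hsplit := Finset.add_sum_erase Finset.univ (fun x => ⟪f x, ω⟫)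
      (Finset.mem_univ a)
    have hsum0 : ∑ x ∈ Finset.univ.erase a, ⟪f x, ω⟫ = 0 := by
      have h1 := hsumf ω hω
      linarith [hsplit, h1, hfa]
    intro x hx
    exact (Finset.sum_eq_zero_iff_of_nonneg hnn).mp hsum0 x
      (Finset.mem_erase.mpr ⟨hx, Finset.mem_univ x⟩)
  have hgq : ∑ x, g x * ⟪f x, ω⟫ = 0 := by
    refine Finset.sum_eq_zero fun x _ => ?_
    by_cases hx : x = a
    · subst hx; rw [hga]; ring
    · rw [hqz x hx]; ring
  -- Werner bound on ∑ g x * ⟪ft x, ω⟫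
  have hwerner : ∑ x, g x * (⟪ft x, ω⟫ - ⟪f x, ω⟫) ≤ D := by
    refine le_trans (le_abs_self _) ?_
    have hmem : |∑ x, g x * (⟪ft x, ω⟫ - ⟪f x, ω⟫)| ≤ sSup Sw :=
      le_csSup hbdd ⟨ω, hω, g, hgLip, rfl⟩
    rw [hD]
    exact hmem
  have hgft : ∑ x, g x * ⟪ft x, ω⟫ ≤ D := by
    have hsplit : ∑ x, g x * ⟪ft x, ω⟫
        = ∑ x, g x * (⟪ft x, ω⟫ - ⟪f x, ω⟫) + ∑ x, g x * ⟪f x, ω⟫ := by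
      rw [← Finset.sum_add_distrib]
      exact Finset.sum_congr rfl fun x _ => by ring
    rw [hsplit, hgq]
    linarith
  -- the tail
  set T : ℝ := ∑ x ∈ Finset.univ.filter (fun x => ¬ dist x a ≤ w / 2), ⟪ft x, ω⟫
    with hT
  clear_value T
  have hTnn : 0 ≤ T := by
    rw [hT]
    exact Finset.sum_nonneg fun x _ => ((hFt.1 x).2 ω hω).1
  have hTD : w / 2 * T ≤ D := by
    calc w / 2 * T = ∑ x ∈ Finset.univ.filter (fun x => ¬ dist x a ≤ w / 2),
          w / 2 * ⟪ft x, ω⟫ := by rw [hT, Finset.mul_sum]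
      _ = ∑ x ∈ Finset.univ.filter (fun x => ¬ dist x a ≤ w / 2),
          g x * ⟪ft x, ω⟫ := by
            refine Finset.sum_congr rfl fun x hx => ?_
            have hd : ¬ dist x a ≤ w / 2 := (Finset.mem_filter.mp hx).2
            have : g x = w / 2 := min_eq_right (le_of_lt (lt_of_not_ge hd))
            rw [this]
      _ ≤ ∑ x, g x * ⟪ft x, ω⟫ := by
            refine Finset.sum_le_sum_of_subset_of_nonneg
              (Finset.filter_subset _ _) fun x _ _ =>
              mul_nonneg (hgnn x) ((hFt.1 x).2 ω hω).1
      _ ≤ D := hgft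
  have hTε : T ≤ ε := by
    by_contra hcon
    push_neg at hcon
    have h1 : w * ε < w * T := mul_lt_mul_of_pos_left hcon hw
    have hεne : ε ≠ 0 := ne_of_gt hεpos
    have h2 : w * ε = 2 * D + ε * δ := by
      rw [hwdef]
      field_simp
    have h3 : w * T ≤ 2 * D := by nlinarith [hTD]
    linarith [mul_pos hεpos hδ]
  -- conclude
  have hball : ballSum ft ω a w = 1 - T := by
    have hsp := Finset.sum_filter_add_sum_filter_not Finset.univ
      (fun x => dist x a ≤ w / 2) (fun x => ⟪ft x, ω⟫)
    simp only [ballSum]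
    rw [hsumft ω hω] at hsp
    rw [hT]
    linarith [hsp]
  rw [hball]
  linarith
end

section
/- Let Ω ⊆ V be a transitive state space (with dim V = N+1 and dim aff Ω = N) whose inner product ⟪·,·⟫ is GL(Ω)-invariant, and let ω_M be the unique GL(Ω)-invariant state, normalized so that ‖ω_M‖ = 1. Then ⟪ω_M, ω⟫ = 1 for every ω ∈ Ω; that is, ω_M represents the unit effect u. -/
open RealInnerProductSpace

variable {V : Type*} [NormedAddCommGroup V] [InnerProductSpace ℝ V] [FiniteDimensional ℝ V]

/-- **Lemma 1 (paper).** In a transitive state space with a `GL(Ω)`-invariant inner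
product, the unique invariant state `ω_M`, normalized to `‖ω_M‖ = 1`, represents the
unit effect: `⟪ω_M, ω⟫ = 1` for every state `ω`. -/
theorem maximallyMixed_is_unit_effect
    {V : Type*} [NormedAddCommGroup V] [InnerProductSpace ℝ V] [FiniteDimensional ℝ V]
    {Ω : Set V} (hΩ : IsStateSpace Ω) (htrans : IsTransitive Ω)
    (hinv : InvariantInner Ω)
    {ωM : V} (hωMΩ : ωM ∈ Ω) (hωMfix : ∀ T ∈ autGroup Ω, T ωM = ωM)
    (huniq : ∀ ω' ∈ Ω, (∀ T ∈ autGroup Ω, T ω' = ω') → ω' = ωM)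
    (hnorm : ‖ωM‖ = 1) :
    ∀ ω ∈ Ω, ⟪ωM, ω⟫ = 1 := by
  obtain ⟨hne, hcomp, hconv, -, -⟩ := hΩ
  obtain ⟨ω₀, hω₀⟩ := hcomp.extremePoints_nonempty hne
  -- inner product with ωM is constant (= ⟪ωM, ω₀⟫) on extreme points
  have hconst : ∀ ω ∈ Set.extremePoints ℝ Ω, ⟪ωM, ω⟫ = ⟪ωM, ω₀⟫ := by
    intro ω hω
    obtain ⟨T, hT, hTω⟩ := htrans ω₀ hω₀ ω hω
    calc ⟪ωM, ω⟫ = ⟪T ωM, T ω₀⟫ := by rw [hωMfix T hT, hTω]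
    _ = ⟪ωM, ω₀⟫ := hinv T hT ωM ω₀
  -- the set where ⟪ωM, ·⟫ = ⟪ωM, ω₀⟫ is closed and convex and contains ext pts
  set S : Set V := {x | ⟪ωM, x⟫ = ⟪ωM, ω₀⟫} with hS
  have hΩS : Ω ⊆ S := by
    have h1 : Set.extremePoints ℝ Ω ⊆ S := hconst
    have h2 : convexHull ℝ (Set.extremePoints ℝ Ω) ⊆ S := by
      apply convexHull_min h1
      intro x hx y hy a b ha hb hab
      simp only [hS, Set.mem_setOf_eq] at hx hy ⊢
      rw [inner_add_right, real_inner_smul_right, real_inner_smul_right, hx, hy]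
      ring_nf
      linear_combination (⟪ωM, ω₀⟫ : ℝ) * hab
    have h3 : closure (convexHull ℝ (Set.extremePoints ℝ Ω)) ⊆ S := by
      apply closure_minimal h2
      exact isClosed_eq (Continuous.inner continuous_const continuous_id) continuous_const
    rw [closure_convexHull_extremePoints hcomp hconv] at h3
    exact h3
  have hval : ⟪ωM, ω₀⟫ = 1 := by
    have := hΩS hωMΩ
    simp only [hS, Set.mem_setOf_eq, real_inner_self_eq_norm_sq, hnorm] at this
    linarith
  intro ω hω
  rw [hΩS hω, hval]
end

section
/- Let Ω ⊆ V be a transitive state space whose inner product ⟪·,·⟫ is GL(Ω)-invariant and whose positive cone V₊ is self-dual with respect to ⟪·,·⟫, and let ω_M be a GL(Ω)-invariant state with ‖ω_M‖ = 1 and ⟪ω_M, ω⟫ = 1 for all ω ∈ Ω. Let F = (f_a)_{a∈A} be an ideal measurement. Then for every a ∈ A one has ⟪ω_M, f_a⟫ > 0, the vector f_a/⟪ω_M, f_a⟫ is a state, and ⟪f_a, f_a/⟪ω_M, f_a⟫⟫ = 1; that is, each f_a/⟪ω_M, f_a⟫ is an eigenstate of F. -/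
open RealInnerProductSpace

variable {V : Type*} [NormedAddCommGroup V] [InnerProductSpace ℝ V] [FiniteDimensional ℝ V]

/-- **Lemma 2 (paper).** In a transitive, self-dual GPT, every effect of an ideal
measurement, normalized by the unit effect, is an eigenstate of that effect. -/
theorem ideal_measurement_eigenstates
    {V : Type*} [NormedAddCommGroup V] [InnerProductSpace ℝ V] [FiniteDimensional ℝ V]
    {Ω : Set V} (hΩ : IsStateSpace Ω) (htrans : IsTransitive Ω)
    (hinv : InvariantInner Ω) (hsd : SelfDualCone Ω)
    {ωM : V} (hωMΩ : ωM ∈ Ω) (hωMfix : ∀ T ∈ autGroup Ω, T ωM = ωM)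
    (hωMnorm : ‖ωM‖ = 1) (hωMunit : ∀ ω ∈ Ω, ⟪ωM, ω⟫ = 1)
    {A : Type*} [Fintype A] {f : A → V} (hF : IsIdeal Ω ωM f) :
    ∀ a : A, 0 < ⟪ωM, f a⟫ ∧ (⟪ωM, f a⟫)⁻¹ • f a ∈ Ω ∧
      ⟪f a, (⟪ωM, f a⟫)⁻¹ • f a⟫ = 1 := by
  obtain ⟨⟨hne, hsum⟩, c, hc, hnormc, hSa⟩ := hF
  have hpos : ∀ x ∈ Ω, ∀ y ∈ Ω, 0 ≤ ⟪x, y⟫ := by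
    intro x hx y hy
    have hy' : y ∈ posCone Ω := ⟨1, y, hy, zero_le_one, (one_smul ℝ y).symm⟩
    rw [hsd] at hy'
    exact hy' x ⟨1, x, hx, zero_le_one, (one_smul ℝ x).symm⟩
  intro a
  obtain ⟨ha0, haeff⟩ := hne a
  have hcone : f a ∈ posCone Ω := by
    rw [hsd]
    rintro x ⟨l, ω, hω, hl, rfl⟩
    rw [real_inner_smul_left]
    exact mul_nonneg hl (by rw [real_inner_comm]; exact (haeff ω hω).1)
  obtain ⟨l, ω, hω, hl0, hfa⟩ := hcone
  have hlpos : 0 < l := by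
    rcases hl0.lt_or_eq with h | h
    · exact h
    · exact absurd hfa (by rw [← h, zero_smul]; exact ha0)
  have hinner : ⟪ωM, f a⟫ = l := by
    rw [hfa, real_inner_smul_right, hωMunit ω hω, mul_one]
  obtain ⟨S, hSext, hcase⟩ := hSa a
  set g : V := (c ^ 2)⁻¹ • ∑ ω' ∈ S, ω' with hg
  have hSΩ : ∀ ω' ∈ S, ω' ∈ Ω := fun ω' h => extremePoints_subset (hSext h)
  have hc2 : (0 : ℝ) < c ^ 2 := by positivity
  have hsum_col : ∀ ω₀ ∈ S, ∑ ω' ∈ S, ⟪ω', ω₀⟫ = c ^ 2 := by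
    intro ω₀ h0
    have hself : ⟪ω₀, ω₀⟫ = c ^ 2 := by
      rw [real_inner_self_eq_norm_sq, hnormc ω₀ (hSext h0)]
    have hle1 : ⟪g, ω₀⟫ ≤ 1 := by
      rcases hcase with hcase | hcase
      · have := (haeff ω₀ (hSΩ ω₀ h0)).2
        rwa [hcase] at this
      · have h1 := (haeff ω₀ (hSΩ ω₀ h0)).1
        rw [hcase, inner_sub_left, hωMunit ω₀ (hSΩ ω₀ h0), sub_nonneg] at h1
        exact h1
    have hle : ∑ ω' ∈ S, ⟪ω', ω₀⟫ ≤ c ^ 2 := by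
      rw [hg, real_inner_smul_left, sum_inner] at hle1
      calc ∑ ω' ∈ S, ⟪ω', ω₀⟫ = c ^ 2 * ((c ^ 2)⁻¹ * ∑ ω' ∈ S, ⟪ω', ω₀⟫) := by
            field_simp
        _ ≤ c ^ 2 * 1 := by
            exact mul_le_mul_of_nonneg_left hle1 hc2.le
        _ = c ^ 2 := mul_one _
    have hge : c ^ 2 ≤ ∑ ω' ∈ S, ⟪ω', ω₀⟫ := by
      rw [← hself]
      exact Finset.single_le_sum (fun ω' h => hpos ω' (hSΩ ω' h) ω₀ (hSΩ ω₀ h0)) h0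
    linarith
  have hg1 : ∀ ω₀ ∈ S, ⟪g, ω₀⟫ = 1 := by
    intro ω₀ h0
    rw [hg, real_inner_smul_left, sum_inner, hsum_col ω₀ h0, inv_mul_cancel₀ hc2.ne']
  have hMg : ⟪ωM, g⟫ = (c ^ 2)⁻¹ * S.card := by
    rw [hg, real_inner_smul_right, inner_sum,
      Finset.sum_congr rfl fun ω' h => hωMunit ω' (hSΩ ω' h)]
    simp
  have hgg : ⟪g, g⟫ = ⟪ωM, g⟫ := by
    conv_lhs => rw [hg, real_inner_smul_right, inner_sum,
      Finset.sum_congr rfl hg1]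
    rw [hMg]
    simp
  have hkey : ⟪f a, f a⟫ = ⟪ωM, f a⟫ := by
    have hMM : ⟪ωM, ωM⟫ = 1 := by
      rw [real_inner_self_eq_norm_sq, hωMnorm, one_pow]
    rcases hcase with hcase | hcase
    · rw [hcase]; exact hgg
    · rw [hcase, inner_sub_left, inner_sub_right, inner_sub_right,
        real_inner_comm g ωM, hMM, hgg]
      linarith [real_inner_comm g ωM]
  refine ⟨hinner ▸ hlpos, ?_, ?_⟩
  · rw [hinner, hfa, smul_smul, inv_mul_cancel₀ hlpos.ne', one_smul]
    exact hω
  · rw [hinner, real_inner_smul_right, hkey, hinner, inv_mul_cancel₀ hlpos.ne']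
end

section
/- Let Ω ⊆ V be a state space, let c > 0, and let ω₁, …, ω_k be pairwise distinct extreme points of Ω, each of norm c, such that ⟪ωᵢ, ωⱼ⟫ ≥ 0 for all i, j and such that c⁻² • ∑_{i=1}^{k} ωᵢ is an effect, i.e. ∑_{i=1}^{k} ⟪ωᵢ, ω⟫ ≤ c² for every ω ∈ Ω. Then the ωᵢ are pairwise orthogonal: ⟪ωᵢ, ωⱼ⟫ = 0 for all i ≠ j. -/
open RealInnerProductSpace

variable {V : Type*} [NormedAddCommGroup V] [InnerProductSpace ℝ V] [FiniteDimensional ℝ V]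

/-- **Orthogonality of pure states underlying an effect (paper, Eq. (16)).** If pairwise
distinct extreme points, each of norm `c`, have pairwise nonnegative inner products and
`c⁻² • ∑ᵢ ωᵢ` is an effect, then they are pairwise orthogonal. -/
theorem extremePoints_of_effect_orthogonal
    {V : Type*} [NormedAddCommGroup V] [InnerProductSpace ℝ V] [FiniteDimensional ℝ V]
    {Ω : Set V} (hΩ : IsStateSpace Ω)
    {c : ℝ} (hc : 0 < c) {k : ℕ} {ω : Fin k → V}
    (hdist : Function.Injective ω)
    (hext : ∀ i, ω i ∈ Set.extremePoints ℝ Ω)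
    (hnorm : ∀ i, ‖ω i‖ = c)
    (hnonneg : ∀ i j, 0 ≤ ⟪ω i, ω j⟫)
    (heffect : ∀ σ ∈ Ω, ∑ i, ⟪ω i, σ⟫ ≤ c ^ 2) :
    ∀ i j, i ≠ j → ⟪ω i, ω j⟫ = 0 := by
  intro i j hij
  have hmem : ω j ∈ Ω := (hext j).1
  have hsum := heffect (ω j) hmem
  have hjj : ⟪ω j, ω j⟫ = c ^ 2 := by
    rw [real_inner_self_eq_norm_sq, hnorm]
  have hsub : ({j, i} : Finset (Fin k)) ⊆ Finset.univ := Finset.subset_univ _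
  have hpair : ∑ i' ∈ ({j, i} : Finset (Fin k)), ⟪ω i', ω j⟫
      ≤ ∑ i', ⟪ω i', ω j⟫ :=
    Finset.sum_le_sum_of_subset_of_nonneg hsub (fun x _ _ => hnonneg x j)
  rw [Finset.sum_pair (Ne.symm hij)] at hpair
  have h0 := hnonneg i j
  nlinarith [hpair, hsum, hjj]
end

section
/- Let Ω ⊆ V be a transitive state space. Then there exists a unique state ω_M ∈ Ω (the maximally mixed state) such that T ω_M = ω_M for every T ∈ GL(Ω). Moreover, if Ω has only finitely many extreme points ω₁, …, ω_n, then ω_M = (1/n) • ∑_{i=1}^{n} ωᵢ. -/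
open RealInnerProductSpace

variable {V : Type*} [NormedAddCommGroup V] [InnerProductSpace ℝ V] [FiniteDimensional ℝ V]

/-! Every `T ∈ GL(Ω)` maps the bounded spanning set `Ω` into itself, and so does `T⁻¹`; hence
`GL(Ω)` is a compact group of operators. Averaging over its Haar probability measure gives a
continuous linear map `A` with `T ∘ A = A ∘ T = A`, which fixes every fixed vector and maps `Ω`
into `Ω`. By transitivity `A` is constant on the extreme points of `Ω`, hence by Krein–Milman on
all of `Ω`; this constant is the maximally mixed state, and any fixed state `ω` equals `A ω`.
If the extreme points are finitely many, each `T` permutes them, so their average is a fixed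
state. -/

open Set MeasureTheory Measure Pointwise

theorem smul_set_eq_self_iff_mapsTo {α β : Type*} [Group α] [MulAction α β] {a : α} {s : Set β} :
    a • s = s ↔ MapsTo (a • ·) s s ∧ MapsTo (a⁻¹ • ·) s s := by
  rw [subset_antisymm_iff, subset_smul_set_iff, smul_set_subset_iff, smul_set_subset_iff]
  rfl

section BoundedOperators

variable {E F : Type*} [NormedAddCommGroup E] [NormedSpace ℝ E] [FiniteDimensional ℝ E]
  [NormedAddCommGroup F] [NormedSpace ℝ F]

theorem isBounded_setOf_mapsTo {s : Set E} {t : Set F} (hs : Submodule.span ℝ s = ⊤)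
    (ht : Bornology.IsBounded t) : Bornology.IsBounded {A : E →L[ℝ] F | MapsTo A s t} := by
  let b := Module.Basis.ofSpan hs.ge
  obtain ⟨C, -, hC⟩ := b.exists_opNorm_le (F := F)
  obtain ⟨R, hR⟩ := isBounded_iff_forall_norm_le.1 ht
  refine isBounded_iff_forall_norm_le.2
    ⟨C * max R 0, fun A hA => hC (le_max_right _ _) fun i => ?_⟩
  exact (hR _ (hA (Module.Basis.ofSpan_subset hs.ge (mem_range_self i)))).trans (le_max_left _ _)

theorem isCompact_stabilizer {Ω : Set E} (hc : IsCompact Ω) (hs : Submodule.span ℝ Ω = ⊤) :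
    IsCompact (MulAction.stabilizer (E →L[ℝ] E)ˣ Ω : Set (E →L[ℝ] E)ˣ) := by
  set S := {A : E →L[ℝ] E | MapsTo A Ω Ω}
  have hS : IsCompact S := by
    refine Metric.isCompact_of_isClosed_isBounded ?_ (isBounded_setOf_mapsTo hs hc.isBounded)
    simp only [S, MapsTo, ofPred_forall]
    exact isClosed_biInter fun x _ =>
      hc.isClosed.preimage ((ContinuousLinearMap.apply ℝ E x).continuous)
  have hstab : (MulAction.stabilizer (E →L[ℝ] E)ˣ Ω : Set (E →L[ℝ] E)ˣ) =
      Units.embedProduct _ ⁻¹' S ×ˢ (MulOpposite.unop ⁻¹' S) := by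
    ext u
    exact smul_set_eq_self_iff_mapsTo
  rw [hstab]
  exact Units.isClosedEmbedding_embedProduct.isCompact_preimage
    (hS.prod (MulOpposite.opHomeomorph.isCompact_preimage.1 hS))

end BoundedOperators

theorem MeasureTheory.Measure.IsHaarMeasure.isMulRightInvariant_of_isProbabilityMeasure
    {G : Type*} [Group G] [TopologicalSpace G] [IsTopologicalGroup G] [LocallyCompactSpace G]
    [MeasurableSpace G] [BorelSpace G] (μ : Measure G) [IsHaarMeasure μ] [IsProbabilityMeasure μ] :
    IsMulRightInvariant μ where
  map_mul_right_eq_self g := by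
    have := isProbabilityMeasure_map (μ := μ) (measurable_mul_const g).aemeasurable
    exact isHaarMeasure_eq_of_isProbabilityMeasure _ _

theorem exists_isHaarMeasure_isProbabilityMeasure (G : Type*) [Group G] [TopologicalSpace G]
    [IsTopologicalGroup G] [CompactSpace G] [MeasurableSpace G] [BorelSpace G] :
    ∃ μ : Measure G, IsHaarMeasure μ ∧ IsProbabilityMeasure μ :=
  ⟨haarMeasure ⊤, inferInstance, ⟨by
    rw [← TopologicalSpace.PositiveCompacts.coe_top (α := G)]
    exact haarMeasure_self⟩⟩

noncomputable def groupAverage {G E : Type*} [Group G] [MeasurableSpace G] [NormedAddCommGroup E]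
    [NormedSpace ℝ E] (μ : Measure G) (ρ : G →* (E →L[ℝ] E)) : E →L[ℝ] E :=
  ∫ g, ρ g ∂μ

section Averaging

variable {G E : Type*} [Group G] [TopologicalSpace G] [CompactSpace G] [MeasurableSpace G]
  [OpensMeasurableSpace G] [NormedAddCommGroup E] [NormedSpace ℝ E]
  (μ : Measure G) {ρ : G →* (E →L[ℝ] E)}

theorem groupAverage_apply [IsFiniteMeasure μ] (hρ : Continuous ρ) (x : E) :
    groupAverage μ ρ x = ∫ g, ρ g x ∂μ :=
  ContinuousLinearMap.integral_apply (hρ.integrable_of_hasCompactSupport (.of_compactSpace _)) x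

theorem mul_groupAverage [CompleteSpace E] [IsFiniteMeasure μ] [MeasurableMul G]
    [IsMulLeftInvariant μ] (hρ : Continuous ρ) (h : G) :
    ρ h * groupAverage μ ρ = groupAverage μ ρ :=
  calc ρ h * groupAverage μ ρ = ∫ g, ρ h * ρ g ∂μ :=
        ((ContinuousLinearMap.mul ℝ _ (ρ h)).integral_comp_comm
          (hρ.integrable_of_hasCompactSupport (.of_compactSpace _))).symm
    _ = ∫ g, ρ (h * g) ∂μ := by simp_rw [map_mul]
    _ = groupAverage μ ρ := integral_mul_left_eq_self (fun g => ρ g) h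

theorem groupAverage_mul [CompleteSpace E] [IsFiniteMeasure μ] [MeasurableMul G]
    [IsMulRightInvariant μ] (hρ : Continuous ρ) (h : G) :
    groupAverage μ ρ * ρ h = groupAverage μ ρ :=
  calc groupAverage μ ρ * ρ h = ∫ g, ρ g * ρ h ∂μ :=
        (((ContinuousLinearMap.mul ℝ _).flip (ρ h)).integral_comp_comm
          (hρ.integrable_of_hasCompactSupport (.of_compactSpace _))).symm
    _ = ∫ g, ρ (g * h) ∂μ := by simp_rw [map_mul]
    _ = groupAverage μ ρ := integral_mul_right_eq_self (fun g => ρ g) h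

theorem groupAverage_apply_of_forall_eq [CompleteSpace E] [IsProbabilityMeasure μ]
    (hρ : Continuous ρ) {x : E} (hx : ∀ g, ρ g x = x) :
    groupAverage μ ρ x = x := by
  simp [groupAverage_apply μ hρ, hx]

theorem groupAverage_mem [CompleteSpace E] [IsProbabilityMeasure μ] {s : Set E}
    (hρ : Continuous ρ) (hconv : Convex ℝ s) (hs : IsClosed s) (hmaps : ∀ g, MapsTo (ρ g) s s)
    {x : E} (hx : x ∈ s) : groupAverage μ ρ x ∈ s := by
  rw [groupAverage_apply μ hρ]
  exact hconv.integral_mem hs (.of_forall fun g => hmaps g hx)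
    ((ContinuousLinearMap.apply ℝ E x).integrable_comp
      (hρ.integrable_of_hasCompactSupport (.of_compactSpace _)))

end Averaging

theorem ContinuousLinearMap.mapsTo_of_mapsTo_extremePoints {E F : Type*} [NormedAddCommGroup E]
    [NormedSpace ℝ E] [NormedAddCommGroup F] [NormedSpace ℝ F] (f : E →L[ℝ] F) {s : Set E}
    {t : Set F} (hs : IsCompact s) (hsc : Convex ℝ s) (ht : IsClosed t) (htc : Convex ℝ t)
    (h : MapsTo f (s.extremePoints ℝ) t) : MapsTo f s t := by
  rw [← closure_convexHull_extremePoints hs hsc]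
  exact closure_minimal (convexHull_min h (htc.linear_preimage f.toLinearMap))
    (ht.preimage f.continuous)

theorem exists_unique_fixedPoint_of_transitive_extremePoints {G E : Type*} [Group G]
    [TopologicalSpace G] [IsTopologicalGroup G] [CompactSpace G] [NormedAddCommGroup E]
    [NormedSpace ℝ E] [CompleteSpace E] (ρ : G →* (E →L[ℝ] E)) (hρ : Continuous ρ) {s : Set E}
    (hs : IsCompact s) (hsc : Convex ℝ s) (hne : s.Nonempty) (hmaps : ∀ g, MapsTo (ρ g) s s)
    (htrans : ∀ x ∈ s.extremePoints ℝ, ∀ y ∈ s.extremePoints ℝ, ∃ g, ρ g x = y) :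
    ∃ c ∈ s, (∀ g, ρ g c = c) ∧ ∀ x ∈ s, (∀ g, ρ g x = x) → x = c := by
  borelize G
  obtain ⟨μ, _, _⟩ := exists_isHaarMeasure_isProbabilityMeasure G
  have := IsHaarMeasure.isMulRightInvariant_of_isProbabilityMeasure μ
  set A := groupAverage μ ρ
  obtain ⟨x₀, hx₀⟩ := hs.extremePoints_nonempty hne
  have hconst : MapsTo A s {A x₀} := by
    refine A.mapsTo_of_mapsTo_extremePoints hs hsc isClosed_singleton (convex_singleton _) ?_
    intro x hx
    obtain ⟨g, rfl⟩ := htrans x₀ hx₀ x hx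
    exact congr($(groupAverage_mul μ hρ g) x₀)
  refine ⟨A x₀, groupAverage_mem μ hρ hsc hs.isClosed hmaps (extremePoints_subset hx₀),
    fun g => congr($(mul_groupAverage μ hρ g) x₀), fun x hx hfix => ?_⟩
  rw [← groupAverage_apply_of_forall_eq μ hρ hfix]
  exact hconst hx

theorem sum_comp_eq_sum_of_image_range_eq {ι β : Type*} [Fintype ι] [AddCommMonoid β]
    [DecidableEq β] {e : ι → β} (he : Function.Injective e) {f : β → β}
    (hf : Function.Injective f) (hfe : f '' range e = range e) : ∑ i, f (e i) = ∑ i, e i := by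
  have himage : Finset.univ.image (f ∘ e) = Finset.univ.image e := by
    apply Finset.coe_injective
    simp only [Finset.coe_image, Finset.coe_univ, image_univ, range_comp, hfe]
  calc ∑ i, f (e i) = ∑ y ∈ Finset.univ.image (f ∘ e), y :=
        (Finset.sum_image (f := fun y => y) fun i _ j _ h => (hf.comp he) h).symm
    _ = ∑ i, e i := by rw [himage, Finset.sum_image (f := fun y => y) fun i _ j _ h => he h]

theorem Convex.inv_natCast_smul_sum_mem {E : Type*} [AddCommGroup E] [Module ℝ E] {s : Set E}
    (hs : Convex ℝ s) {n : ℕ} (hn : n ≠ 0) {e : Fin n → E} (he : ∀ i, e i ∈ s) :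
    (n : ℝ)⁻¹ • ∑ i, e i ∈ s := by
  rw [Finset.smul_sum]
  exact hs.sum_mem (fun _ _ => by positivity) (by simp [hn]) fun i _ => he i

section StateSpace

variable {E : Type*} [NormedAddCommGroup E] [InnerProductSpace ℝ E]

theorem IsStateSpace.span_eq_top [FiniteDimensional ℝ E] {Ω : Set E} (hΩ : IsStateSpace Ω) :
    Submodule.span ℝ Ω = ⊤ := by
  obtain ⟨⟨ω₀, hω₀⟩, -, -, h0, hdim⟩ := hΩ
  have hω₀' : ω₀ ∉ vectorSpan ℝ Ω := fun h => h0 <| by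
    rw [← AffineSubspace.vsub_right_mem_direction_iff_mem (subset_affineSpan ℝ Ω hω₀),
      direction_affineSpan]
    simpa using neg_mem h
  have hle : vectorSpan ℝ Ω ≤ Submodule.span ℝ Ω := by
    rw [vectorSpan_def, Submodule.span_le]
    rintro _ ⟨a, ha, b, hb, rfl⟩
    exact sub_mem (Submodule.subset_span ha) (Submodule.subset_span hb)
  have hlt : vectorSpan ℝ Ω < Submodule.span ℝ Ω :=
    hle.lt_of_ne fun h => hω₀' (h ▸ Submodule.subset_span hω₀)
  refine Submodule.eq_top_of_finrank_eq (le_antisymm (Submodule.finrank_le _) ?_)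
  have := Submodule.finrank_lt_finrank_of_lt hlt
  omega

theorem exists_mem_stabilizer_of_mem_autGroup [FiniteDimensional ℝ E] {Ω : Set E}
    {T : E ≃ₗ[ℝ] E} (hT : T ∈ autGroup Ω) :
    ∃ g ∈ MulAction.stabilizer (E →L[ℝ] E)ˣ Ω, ⇑(g : E →L[ℝ] E) = T :=
  ⟨T.toContinuousLinearEquiv.toUnit, by simpa [MulAction.mem_stabilizer_iff, ← image_smul], rfl⟩

theorem exists_mem_autGroup_of_mem_stabilizer {Ω : Set E} {g : (E →L[ℝ] E)ˣ}
    (hg : g ∈ MulAction.stabilizer (E →L[ℝ] E)ˣ Ω) :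
    ∃ T ∈ autGroup Ω, ⇑T = ⇑(g : E →L[ℝ] E) :=
  ⟨(ContinuousLinearEquiv.unitsEquiv ℝ E g).toLinearEquiv, by simpa [autGroup, ← image_smul], rfl⟩

theorem forall_mem_stabilizer_apply_eq_iff [FiniteDimensional ℝ E] {Ω : Set E} {x : E} :
    (∀ g ∈ MulAction.stabilizer (E →L[ℝ] E)ˣ Ω, (g : E →L[ℝ] E) x = x) ↔
      ∀ T ∈ autGroup Ω, T x = x := by
  constructor
  · intro h T hT
    obtain ⟨g, hg, hgT⟩ := exists_mem_stabilizer_of_mem_autGroup hT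
    rw [← hgT, h g hg]
  · intro h g hg
    obtain ⟨T, hT, hTg⟩ := exists_mem_autGroup_of_mem_stabilizer hg
    rw [← hTg, h T hT]

theorem apply_smul_sum_of_extremePoints_eq_range {ι : Type*} [Fintype ι] {Ω : Set E}
    {e : ι → E} (he : Function.Injective e) (hext : Ω.extremePoints ℝ = range e)
    {T : E ≃ₗ[ℝ] E} (hT : T ∈ autGroup Ω) (c : ℝ) : T (c • ∑ i, e i) = c • ∑ i, e i := by
  classical
  have hTe : T '' range e = range e := by rw [← hext, image_extremePoints, hT]
  rw [map_smul, _root_.map_sum, sum_comp_eq_sum_of_image_range_eq he T.injective hTe]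

end StateSpace

/-- **Proposition 1 (paper).** A transitive state space has a unique maximally mixed
state, which is the uniform average of the extreme points when these are finite. -/
theorem exists_unique_maximallyMixed
    {V : Type*} [NormedAddCommGroup V] [InnerProductSpace ℝ V] [FiniteDimensional ℝ V]
    {Ω : Set V} (hΩ : IsStateSpace Ω) (htrans : IsTransitive Ω) :
    ∃ ωM ∈ Ω, (∀ T ∈ autGroup Ω, T ωM = ωM) ∧
      (∀ ω' ∈ Ω, (∀ T ∈ autGroup Ω, T ω' = ω') → ω' = ωM) ∧
      (∀ (n : ℕ) (e : Fin n → V), Function.Injective e →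
        Set.extremePoints ℝ Ω = Set.range e → ωM = (n : ℝ)⁻¹ • ∑ i, e i) := by
  have hspan := hΩ.span_eq_top
  obtain ⟨hne, hc, hconv, -, -⟩ := hΩ
  let G := MulAction.stabilizer (V →L[ℝ] V)ˣ Ω
  have : CompactSpace G := isCompact_iff_compactSpace.1 (isCompact_stabilizer hc hspan)
  let ρ : G →* (V →L[ℝ] V) := (Units.coeHom _).comp G.subtype
  have hfix (x : V) : (∀ g, ρ g x = x) ↔ ∀ T ∈ autGroup Ω, T x = x := by
    rw [← forall_mem_stabilizer_apply_eq_iff, Subtype.forall]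
    rfl
  obtain ⟨c, hcΩ, hcfix, huniq⟩ := exists_unique_fixedPoint_of_transitive_extremePoints ρ
    (Units.continuous_val.comp continuous_subtype_val) hc hconv hne
    (fun g => (smul_set_eq_self_iff_mapsTo.1 g.2).1) fun x hx y hy => by
      obtain ⟨T, hT, rfl⟩ := htrans x hx y hy
      obtain ⟨g, hg, hgT⟩ := exists_mem_stabilizer_of_mem_autGroup hT
      exact ⟨⟨g, hg⟩, congr_fun hgT x⟩
  refine ⟨c, hcΩ, (hfix c).1 hcfix, fun ω hω hωfix => huniq ω hω ((hfix ω).2 hωfix),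
    fun n e he hext => (huniq _ ?_ ((hfix _).2 fun T hT =>
      apply_smul_sum_of_extremePoints_eq_range he hext hT _)).symm⟩
  obtain ⟨x, hx⟩ := hc.extremePoints_nonempty hne
  obtain ⟨i, -⟩ := hext ▸ hx
  exact hconv.inv_natCast_smul_sum_mem i.pos.ne' fun i =>
    extremePoints_subset (hext ▸ mem_range_self i)
end

section
/- Let Ω ⊆ V be a state space with only finitely many extreme points and positive cone V₊, and let J : V → V be a linear map that is strictly positive with respect to the inner product ⟪·,·⟫ (i.e. ⟪x, J y⟫ = ⟪J x, y⟫ for all x, y and ⟪x, J x⟫ > 0 for all nonzero x) and satisfies J(V₊) = V₊. Then for every extreme point ω of Ω there exists μ(ω) > 0 such that J ω = μ(ω) • ω. -/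
/-!
Being positive definite, `J` is injective; as it maps `V₊` onto itself, it maps extreme rays
of `V₊` to extreme rays.
There are finitely many of them, so some power fixes the ray of `ω`: `J ^ m ω = c • ω` with
`c > 0`. Writing `μ = c ^ (1 / m)`, the factorization `J ^ m - μ ^ m = Q (J - μ)` with
`Q = ∑ i < m, μ ^ (m - 1 - i) J ^ i ≥ μ ^ (m - 1)` positive definite gives `J ω = μ • ω`.
-/

open RealInnerProductSpace

variable {V : Type*} [NormedAddCommGroup V] [InnerProductSpace ℝ V] [FiniteDimensional ℝ V]

namespace LinearMap
variable {E : Type*} [NormedAddCommGroup E] [InnerProductSpace ℝ E]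

theorem IsPositive.pow {T : E →ₗ[ℝ] E} (hT : T.IsPositive) (n : ℕ) : (T ^ n).IsPositive := by
  refine ⟨hT.isSymmetric.pow n, fun x => ?_⟩
  obtain ⟨a, rfl | rfl⟩ := Nat.even_or_odd' n
  · rw [two_mul, pow_add, Module.End.mul_apply, hT.isSymmetric.pow a]
    exact real_inner_self_nonneg
  · rw [show 2 * a + 1 = a + (1 + a) by ring, pow_add, pow_add, pow_one, Module.End.mul_apply,
      Module.End.mul_apply, hT.isSymmetric.pow a]
    exact hT.inner_nonneg_left ((T ^ a) x)

theorem IsPositive.apply_eq_smul_of_pow_apply_eq_pow_smul {T : E →ₗ[ℝ] E} (hT : T.IsPositive)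
    {m : ℕ} (hm : m ≠ 0) {μ : ℝ} (hμ : 0 < μ) {x : E} (hx : (T ^ m) x = μ ^ m • x) :
    T x = μ • x := by
  set c : Module.End ℝ E := algebraMap ℝ _ μ
  set Q : Module.End ℝ E := ∑ i ∈ Finset.range m, T ^ i * c ^ (m - 1 - i)
  have hQ : ∀ z, ⟪Q z, z⟫ = ∑ i ∈ Finset.range m, μ ^ (m - 1 - i) * ⟪(T ^ i) z, z⟫ := by
    intro z
    simp [Q, c, ← map_pow, sum_inner, real_inner_smul_left]
  have hQ_inj : ∀ z, Q z = 0 → z = 0 := by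
    intro z hz
    have hnonneg : ∀ i ∈ Finset.range m, 0 ≤ μ ^ (m - 1 - i) * ⟪(T ^ i) z, z⟫ := fun i _ =>
      mul_nonneg (pow_pos hμ _).le ((hT.pow i).inner_nonneg_left z)
    have hsum : ∑ i ∈ Finset.range m, μ ^ (m - 1 - i) * ⟪(T ^ i) z, z⟫ = 0 := by
      rw [← hQ, hz, inner_zero_left]
    have hterm := (Finset.sum_eq_zero_iff_of_nonneg hnonneg).mp hsum 0
      (Finset.mem_range.mpr (Nat.pos_of_ne_zero hm))
    simpa [(pow_pos hμ _).ne'] using hterm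
  have hfactor : Q * (T - c) = T ^ m - c ^ m :=
    (Algebra.commute_algebraMap_right μ T).geom_sum₂_mul m
  have hroot : Q (T x - μ • x) = 0 := by
    simpa [c, ← map_pow, hx] using congrArg (· x) hfactor
  exact sub_eq_zero.mp (hQ_inj _ hroot)

end LinearMap

section RealModule

variable {E : Type*} [AddCommGroup E] [Module ℝ E]

def IsExtremeRay (C : Set E) (x : E) : Prop :=
  ∀ y ∈ C, ∀ z ∈ C, y + z = x → ∃ a : ℝ, y = a • x

theorem IsExtremeRay.map {C : Set E} {x : E} (h : IsExtremeRay C x) {J : E →ₗ[ℝ] E}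
    (hJ : Function.Injective J) (hC : C ⊆ J '' C) : IsExtremeRay C (J x) := by
  intro y hy z hz hyz
  obtain ⟨y', hy', rfl⟩ := hC hy
  obtain ⟨z', hz', rfl⟩ := hC hz
  obtain ⟨a, rfl⟩ := h y' hy' z' hz' (hJ (by rw [map_add, hyz]))
  exact ⟨a, map_smul J a x⟩

theorem IsExtremeRay.of_smul {C : Set E} {l : ℝ} (hC : ∀ y ∈ C, l • y ∈ C) (hl : l ≠ 0)
    {x : E} (h : IsExtremeRay C (l • x)) : IsExtremeRay C x := by
  intro y hy z hz hyz
  obtain ⟨a, ha⟩ := h (l • y) (hC y hy) (l • z) (hC z hz) (by rw [← smul_add, hyz])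
  exact ⟨a, smul_right_injective E hl (ha.trans (smul_comm a l x))⟩

theorem exists_pow_apply_eq_smul_self_of_finite {S : Set E} (hS : S.Finite) {J : E →ₗ[ℝ] E}
    (hJ : Function.Injective J) {x : E}
    (h : ∀ k : ℕ, ∃ l : ℝ, 0 < l ∧ ∃ ψ ∈ S, (J ^ k) x = l • ψ) :
    ∃ m ≠ 0, ∃ c : ℝ, 0 < c ∧ (J ^ m) x = c • x := by
  choose l hl ψ hψ hJψ using h
  obtain ⟨i, j, hij, hψij⟩ := Set.Finite.exists_lt_map_eq_of_forall_mem hψ hS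
  refine ⟨j - i, by omega, l j / l i, div_pos (hl j) (hl i), ?_⟩
  have hJi : Function.Injective (J ^ i) := by
    rw [Module.End.coe_pow]
    exact hJ.iterate i
  apply hJi
  rw [← Module.End.mul_apply, ← pow_add, Nat.add_sub_cancel' hij.le, map_smul, hJψ, hJψ, hψij,
    smul_smul, div_mul_cancel₀ _ (hl i).ne']

theorem exists_linearMap_eq_one_of_zero_notMem_affineSpan {Ω : Set E}
    (h0 : (0 : E) ∉ affineSpan ℝ Ω) :
    ∃ f : E →ₗ[ℝ] ℝ, ∀ ω ∈ Ω, f ω = 1 := by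
  obtain rfl | ⟨p, hp⟩ := Ω.eq_empty_or_nonempty
  · exact ⟨0, by simp⟩
  have hp_notMem : p ∉ vectorSpan ℝ Ω := fun hmem => h0 <| by
    simpa using (AffineSubspace.vadd_mem_iff_mem_direction (-p) (mem_affineSpan ℝ hp)).mpr
      (by simpa [direction_affineSpan] using (vectorSpan ℝ Ω).neg_mem hmem)
  obtain ⟨f, hfp, hker⟩ := Submodule.exists_le_ker_of_notMem hp_notMem
  refine ⟨(f p)⁻¹ • f, fun ω hω => ?_⟩
  have hfω : f (ω - p) = 0 := hker (by simpa using vsub_mem_vectorSpan ℝ hω hp)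
  rw [map_sub, sub_eq_zero] at hfω
  simp [hfω, hfp]

end RealModule

section PosCone

variable {E : Type*} [NormedAddCommGroup E] [InnerProductSpace ℝ E]
variable {Ω : Set E} {f : E →ₗ[ℝ] ℝ}

theorem smul_mem_posCone {x : E} (hx : x ∈ posCone Ω) {l : ℝ} (hl : 0 ≤ l) :
    l • x ∈ posCone Ω := by
  obtain ⟨m, ψ, hψ, hm, rfl⟩ := hx
  exact ⟨l * m, ψ, hψ, mul_nonneg hl hm, (mul_smul l m ψ).symm⟩

theorem isExtremeRay_posCone_of_mem_extremePoints (hf : ∀ ω ∈ Ω, f ω = 1) {ω : E}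
    (hω : ω ∈ Set.extremePoints ℝ Ω) : IsExtremeRay (posCone Ω) ω := by
  rintro _ ⟨a, ψ, hψ, ha, rfl⟩ _ ⟨b, φ, hφ, hb, rfl⟩ hsum
  have hab : a + b = 1 := by
    simpa [hf ψ hψ, hf φ hφ, hf ω hω.1] using congrArg f hsum
  obtain rfl | ha := ha.eq_or_lt
  · exact ⟨0, by simp⟩
  obtain rfl | hb := hb.eq_or_lt
  · exact ⟨1, by simpa using hsum⟩
  exact ⟨a, by rw [hω.2 hψ hφ ⟨a, b, ha, hb, hab, hsum⟩]⟩

theorem mem_extremePoints_of_isExtremeRay_posCone (hf : ∀ ω ∈ Ω, f ω = 1) {ω : E} (hω : ω ∈ Ω)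
    (h : IsExtremeRay (posCone Ω) ω) : ω ∈ Set.extremePoints ℝ Ω := by
  refine ⟨hω, fun ψ hψ φ hφ ⟨a, b, ha, hb, _, hsum⟩ => ?_⟩
  obtain ⟨c, hc⟩ := h (a • ψ) ⟨a, ψ, hψ, ha.le, rfl⟩ (b • φ) ⟨b, φ, hφ, hb.le, rfl⟩ hsum
  have hca : c = a := by simpa [hf ψ hψ, hf ω hω] using (congrArg f hc).symm
  exact smul_right_injective E ha.ne' (hc.trans (by rw [hca]))

theorem exists_apply_eq_smul_mem_extremePoints (hf : ∀ ω ∈ Ω, f ω = 1) {J : E →ₗ[ℝ] E}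
    (hJ : Function.Injective J) (hcone : J '' posCone Ω = posCone Ω) {ω : E}
    (hω : ω ∈ Set.extremePoints ℝ Ω) :
    ∃ l : ℝ, 0 < l ∧ ∃ ψ ∈ Set.extremePoints ℝ Ω, J ω = l • ψ := by
  obtain ⟨l, ψ, hψ, hl, hJω⟩ : J ω ∈ posCone Ω :=
    hcone ▸ Set.mem_image_of_mem J ⟨1, ω, hω.1, zero_le_one, (one_smul ℝ ω).symm⟩
  have hl : 0 < l := hl.lt_of_ne <| by
    rintro rfl
    have hω0 : ω = 0 := hJ (by rw [hJω, zero_smul, map_zero])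
    simpa [hω0] using hf ω hω.1
  have hray : IsExtremeRay (posCone Ω) (l • ψ) :=
    hJω ▸ (isExtremeRay_posCone_of_mem_extremePoints hf hω).map hJ hcone.symm.subset
  exact ⟨l, hl, ψ, mem_extremePoints_of_isExtremeRay_posCone hf hψ
    (hray.of_smul (fun y hy => smul_mem_posCone hy hl.le) hl.ne'), hJω⟩

theorem exists_pow_apply_eq_smul_mem_extremePoints (hf : ∀ ω ∈ Ω, f ω = 1) {J : E →ₗ[ℝ] E}
    (hJ : Function.Injective J) (hcone : J '' posCone Ω = posCone Ω) {ω : E}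
    (hω : ω ∈ Set.extremePoints ℝ Ω) (k : ℕ) :
    ∃ l : ℝ, 0 < l ∧ ∃ ψ ∈ Set.extremePoints ℝ Ω, (J ^ k) ω = l • ψ := by
  induction k with
  | zero => exact ⟨1, one_pos, ω, hω, by simp⟩
  | succ k ih =>
    obtain ⟨l, hl, ψ, hψ, hJψ⟩ := ih
    obtain ⟨l', hl', ψ', hψ', hJψ'⟩ := exists_apply_eq_smul_mem_extremePoints hf hJ hcone hψ
    refine ⟨l * l', mul_pos hl hl', ψ', hψ', ?_⟩
    rw [pow_succ', Module.End.mul_apply, hJψ, map_smul, hJψ', smul_smul]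

end PosCone

theorem strictlyPositive_cone_preserving_fixes_extremePoints_general
    {V : Type*} [NormedAddCommGroup V] [InnerProductSpace ℝ V]
    {Ω : Set V} (hΩ : IsStateSpace Ω) (hfin : (Set.extremePoints ℝ Ω).Finite)
    {J : V →ₗ[ℝ] V} (hsym : ∀ x y : V, ⟪x, J y⟫ = ⟪J x, y⟫)
    (hpos : ∀ x : V, x ≠ 0 → 0 < ⟪x, J x⟫)
    (hcone : J '' posCone Ω = posCone Ω) :
    ∀ ω ∈ Set.extremePoints ℝ Ω, ∃ μ : ℝ, 0 < μ ∧ J ω = μ • ω := by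
  intro ω hω
  have hJpos : J.IsPositive := by
    refine ⟨fun x y => (hsym x y).symm, fun x => ?_⟩
    obtain rfl | hx := eq_or_ne x 0
    · simp
    · simpa [real_inner_comm] using (hpos x hx).le
  have hJinj : Function.Injective J := (injective_iff_map_eq_zero J).mpr fun x hx => by
    by_contra hx0
    simpa [hx] using hpos x hx0
  obtain ⟨f, hf⟩ := exists_linearMap_eq_one_of_zero_notMem_affineSpan hΩ.2.2.2.1
  obtain ⟨m, hm, c, hc, hJm⟩ := exists_pow_apply_eq_smul_self_of_finite hfin hJinj
    (exists_pow_apply_eq_smul_mem_extremePoints hf hJinj hcone hω)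
  refine ⟨c ^ (m⁻¹ : ℝ), Real.rpow_pos_of_pos hc _,
    hJpos.apply_eq_smul_of_pow_apply_eq_pow_smul hm (Real.rpow_pos_of_pos hc _) ?_⟩
  rwa [Real.rpow_inv_natCast_pow hc.le hm]

/-- **Lemma B.3 (paper).** If `Ω` has finitely many extreme points and `J` is a strictly
positive linear map with `J(V₊) = V₊`, then `J` fixes every extreme ray: each extreme
point is an eigenvector of `J` with positive eigenvalue. -/
theorem strictlyPositive_cone_preserving_fixes_extremePoints
    {V : Type*} [NormedAddCommGroup V] [InnerProductSpace ℝ V] [FiniteDimensional ℝ V]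
    {Ω : Set V} (hΩ : IsStateSpace Ω) (hfin : (Set.extremePoints ℝ Ω).Finite)
    {J : V →ₗ[ℝ] V} (hsym : ∀ x y : V, ⟪x, J y⟫ = ⟪J x, y⟫)
    (hpos : ∀ x : V, x ≠ 0 → 0 < ⟪x, J x⟫)
    (hcone : J '' posCone Ω = posCone Ω) :
    ∀ ω ∈ Set.extremePoints ℝ Ω, ∃ μ : ℝ, 0 < μ ∧ J ω = μ • ω :=
  strictlyPositive_cone_preserving_fixes_extremePoints_general hΩ hfin hsym hpos hcone
end
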